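/- arXiv:2504.21762 — 8 statements merged into one kernel-verified Lean document; each statement's English description precedes it below -/
import Mathlib

section
/- Let x, y ∈ AdS₃ with y ≠ −x. Then q(x,y) < 1 if and only if there exist t ∈ ℝ and v ∈ ℝ⁴ with q(x,v) = 0 such that one of the following holds: (i) q(v) = 1 and y = cosh(t)·x + sinh(t)·v (space-like geodesic); (ii) q(v) = −1 and y = cos(t)·x + sin(t)·v (time-like geodesic); (iii) q(v) = 0 and y = x + t·v (light-like geodesic). In particular, if q(x,y) ≥ 1 and y ≠ −x, then x and y are not joined by any geodesic of AdS₃. -/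
noncomputable section

/-- The bilinear form `q(x,y) = -x₁y₁ - x₂y₂ + x₃y₃ + x₄y₄` on `ℝ⁴`. -/
def qf (x y : Fin 4 → ℝ) : ℝ := -(x 0 * y 0) - x 1 * y 1 + x 2 * y 2 + x 3 * y 3

lemma qf_lin (x u v : Fin 4 → ℝ) (a b : ℝ) :
    qf x (a • u + b • v) = a * qf x u + b * qf x v := by
  simp [qf, Pi.add_apply, Pi.smul_apply, smul_eq_mul]; ring

lemma qf_lin' (x u v : Fin 4 → ℝ) (c : ℝ) :
    qf x (u + c • v) = qf x u + c * qf x v := by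
  simp [qf, Pi.add_apply, Pi.smul_apply, smul_eq_mul]; ring

lemma qf_smul_sq (c : ℝ) (v : Fin 4 → ℝ) :
    qf (c • v) (c • v) = c ^ 2 * qf v v := by
  simp [qf, Pi.smul_apply, smul_eq_mul]; ring

lemma qf_smul_right (x v : Fin 4 → ℝ) (c : ℝ) :
    qf x (c • v) = c * qf x v := by
  simp [qf, Pi.smul_apply, smul_eq_mul]; ring

lemma qf_expand' (y x : Fin 4 → ℝ) (a : ℝ) :
    qf (y + a • x) (y + a • x) = qf y y + 2 * a * qf x y + a ^ 2 * qf x x := by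
  simp [qf, Pi.add_apply, Pi.smul_apply, smul_eq_mul]; ring

/-- Two points `x ≠ -y` of `AdS₃` are joined by a geodesic iff `q(x,y) < 1`, and the
geodesic is space-like, time-like or light-like according to the causal type of its
direction vector. -/
theorem stmt0 (x y : Fin 4 → ℝ) (hx : qf x x = -1) (hy : qf y y = -1)
    (hne : y ≠ -x) :
    qf x y < 1 ↔
      ∃ (t : ℝ) (v : Fin 4 → ℝ), qf x v = 0 ∧
        ((qf v v = 1 ∧ y = Real.cosh t • x + Real.sinh t • v) ∨
         (qf v v = -1 ∧ y = Real.cos t • x + Real.sin t • v) ∨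
         (qf v v = 0 ∧ y = x + t • v)) := by
  constructor
  · intro ha
    set a : ℝ := qf x y with haa
    have hxw : qf x (y + a • x) = 0 := by
      rw [qf_lin', hx]; ring
    have hww : qf (y + a • x) (y + a • x) = a ^ 2 - 1 := by
      rw [qf_expand', hy, hx]; ring
    rcases lt_trichotomy a (-1) with h2 | h2 | h2
    · -- space-like
      have hapos : 0 < a ^ 2 - 1 := by nlinarith
      set s : ℝ := Real.sqrt (a ^ 2 - 1) with hs
      have hs2 : s ^ 2 = a ^ 2 - 1 := Real.sq_sqrt hapos.le
      have hspos : 0 < s := Real.sqrt_pos.mpr hapos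
      refine ⟨Real.arsinh s, s⁻¹ • (y + a • x), ?_, Or.inl ⟨?_, ?_⟩⟩
      · rw [qf_smul_right, hxw]; ring
      · rw [qf_smul_sq, hww]
        field_simp
        nlinarith [hs2]
      · have hcosh : Real.cosh (Real.arsinh s) = -a := by
          rw [Real.cosh_arsinh]
          rw [show (1 : ℝ) + s ^ 2 = (-a) ^ 2 by nlinarith]
          exact Real.sqrt_sq (by linarith)
        have hsinh : Real.sinh (Real.arsinh s) = s := Real.sinh_arsinh s
        rw [hcosh, hsinh, smul_smul, mul_inv_cancel₀ hspos.ne']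
        funext i
        simp [Pi.add_apply, Pi.smul_apply, smul_eq_mul]
    · -- light-like
      refine ⟨1, y + a • x, hxw, Or.inr (Or.inr ⟨?_, ?_⟩)⟩
      · rw [hww, h2]; ring
      · funext i
        simp [h2, Pi.add_apply, Pi.smul_apply, smul_eq_mul]
    · -- time-like
      have hapos : 0 < 1 - a ^ 2 := by nlinarith
      set s : ℝ := Real.sqrt (1 - a ^ 2) with hs
      have hs2 : s ^ 2 = 1 - a ^ 2 := Real.sq_sqrt hapos.le
      have hspos : 0 < s := Real.sqrt_pos.mpr hapos
      refine ⟨Real.arccos (-a), s⁻¹ • (y + a • x), ?_, Or.inr (Or.inl ⟨?_, ?_⟩)⟩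
      · rw [qf_smul_right, hxw]; ring
      · rw [qf_smul_sq, hww]
        field_simp
        nlinarith [hs2]
      · have hcos : Real.cos (Real.arccos (-a)) = -a :=
          Real.cos_arccos (by linarith) (by linarith)
        have hsin : Real.sin (Real.arccos (-a)) = s := by
          rw [Real.sin_arccos]
          congr 1
          ring
        rw [hcos, hsin, smul_smul, mul_inv_cancel₀ hspos.ne']
        funext i
        simp [Pi.add_apply, Pi.smul_apply, smul_eq_mul]
  · rintro ⟨t, v, hxv, ⟨hv, hyy⟩ | ⟨hv, hyy⟩ | ⟨hv, hyy⟩⟩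
    · have hq : qf x y = -(Real.cosh t) := by
        rw [hyy, qf_lin, hx, hxv]; ring
      have h1 := Real.one_le_cosh t
      linarith
    · have hq : qf x y = -(Real.cos t) := by
        rw [hyy, qf_lin, hx, hxv]; ring
      have hc := Real.neg_one_le_cos t
      rcases eq_or_lt_of_le hc with hceq | hclt
      · exfalso
        have hsin : Real.sin t = 0 := by
          have h := Real.sin_sq_add_cos_sq t
          nlinarith
        apply hne
        rw [hyy, ← hceq, hsin]
        funext i
        simp [Pi.add_apply, Pi.smul_apply, smul_eq_mul]
      · linarith
    · have hq : qf x y = -1 := by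
        rw [hyy, qf_lin', hx, hxv]; ring
      linarith

end
end

section
/- Let Λ ⊂ ℝ⁴ be an acausal circle and let K ⊆ O₊(Λ) be a compact subset. Then there exists δ < 1 such that q(x,y) ≤ δ for all x ∈ K and all y ∈ O₊(Λ). -/
noncomputable section

/-- The identification `ℂ × ℂ ≅ ℝ⁴`, `(w, z) ↦ (Re w, Im w, Re z, Im z)`. -/
def toR4 (p : ℂ × ℂ) : Fin 4 → ℝ := ![p.1.re, p.1.im, p.2.re, p.2.im]

/-- An acausal circle: the graph `{(F(z), z) : z ∈ S¹}` of a distance-decreasing map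
`F : S¹ → S¹`, viewed inside `ℝ⁴`. -/
def IsAcausalCircle (Λ : Set (Fin 4 → ℝ)) : Prop :=
  ∃ F : ℂ → ℂ,
    (∀ z : ℂ, ‖z‖ = 1 → ‖F z‖ = 1) ∧
    (∀ z z' : ℂ, ‖z‖ = 1 → ‖z'‖ = 1 → z ≠ z' →
      ‖F z - F z'‖ < ‖z - z'‖) ∧
    Λ = {x | ∃ z : ℂ, ‖z‖ = 1 ∧ x = toR4 (F z, z)}

/-- The invisible domain `O₊(Λ) = {x ∈ AdS₃ : q(x,ν) < 0 for all ν ∈ Λ}`. -/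
def invisible (Λ : Set (Fin 4 → ℝ)) : Set (Fin 4 → ℝ) :=
  {x | qf x x = -1 ∧ ∀ ν ∈ Λ, qf x ν < 0}

/-!
Write `x ∈ ℝ⁴` as `(a, b) ∈ ℂ × ℂ`, so that `q(x, toR4 (u, z)) = ⟪b, z⟫ - ⟪a, u⟫` and
`q(x, x) = |b|² - |a|²`. By compactness, `q(x, ν) ≤ -ε` on `K × Λ` for some `ε > 0`, hence
`w = x + y` satisfies `q(w, ν) ≤ -ε` on `Λ` for `x ∈ K`, `y ∈ O₊(Λ)`. Testing this against the
point `(F z, z) ∈ Λ` with `z` the direction of `b` gives `|b| - |a| ≤ -ε`, so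
`-2 + 2 q(x, y) = q(w, w) = (|b| - |a|)(|b| + |a|) ≤ -ε²`.
-/

open scoped RealInnerProductSpace

def ofR4 (x : Fin 4 → ℝ) : ℂ × ℂ := (⟨x 0, x 1⟩, ⟨x 2, x 3⟩)

lemma toR4_ofR4 (x : Fin 4 → ℝ) : toR4 (ofR4 x) = x := by
  ext i; fin_cases i <;> rfl

lemma continuous_toR4 : Continuous toR4 :=
  continuous_pi fun i => by fin_cases i <;> simp only [toR4] <;> fun_prop

lemma continuous_qf : Continuous fun p : (Fin 4 → ℝ) × (Fin 4 → ℝ) => qf p.1 p.2 := by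
  unfold qf; fun_prop

lemma qf_add_left (x y ν : Fin 4 → ℝ) : qf (x + y) ν = qf x ν + qf y ν := by
  simp only [qf, Pi.add_apply]; ring

lemma qf_add_self (x y : Fin 4 → ℝ) : qf (x + y) (x + y) = qf x x + 2 * qf x y + qf y y := by
  simp only [qf, Pi.add_apply]; ring

lemma qf_toR4_right (x : Fin 4 → ℝ) (p : ℂ × ℂ) :
    qf x (toR4 p) = ⟪(ofR4 x).2, p.2⟫ - ⟪(ofR4 x).1, p.1⟫ := by
  simp only [qf, toR4, ofR4, Matrix.cons_val_zero, Matrix.cons_val_one, Matrix.cons_val,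
    Complex.inner, Complex.mul_re, Complex.conj_re, Complex.conj_im]
  ring

lemma qf_self (x : Fin 4 → ℝ) : qf x x = ‖(ofR4 x).2‖ ^ 2 - ‖(ofR4 x).1‖ ^ 2 := by
  have h := qf_toR4_right x (ofR4 x)
  rwa [toR4_ofR4, real_inner_self_eq_norm_sq, real_inner_self_eq_norm_sq] at h

lemma exists_norm_eq_one_real_inner_eq_norm {E : Type*} [NormedAddCommGroup E]
    [InnerProductSpace ℝ E] [Nontrivial E] (v : E) : ∃ u : E, ‖u‖ = 1 ∧ ⟪v, u⟫ = ‖v‖ := by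
  rcases eq_or_ne v 0 with rfl | hv
  · obtain ⟨u, hu⟩ := exists_norm_eq E zero_le_one
    exact ⟨u, hu, by simp⟩
  · refine ⟨‖v‖⁻¹ • v, norm_smul_inv_norm hv, ?_⟩
    rw [real_inner_smul_right, real_inner_self_eq_norm_sq]
    field_simp [norm_ne_zero_iff.2 hv]

namespace IsAcausalCircle

variable {Λ : Set (Fin 4 → ℝ)} (hΛ : IsAcausalCircle Λ)
include hΛ

theorem isCompact : IsCompact Λ := by
  obtain ⟨F, -, hFd, rfl⟩ := hΛ
  have hFcont : ContinuousOn F (Metric.sphere 0 1) := by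
    refine (LipschitzOnWith.mk_one fun z hz z' hz' => ?_).continuousOn
    rcases eq_or_ne z z' with rfl | hne
    · simp
    · simp only [mem_sphere_iff_norm, sub_zero] at hz hz'
      simpa only [dist_eq_norm] using (hFd z z' hz hz' hne).le
  have himage : {x | ∃ z : ℂ, ‖z‖ = 1 ∧ x = toR4 (F z, z)} =
      (fun z => toR4 (F z, z)) '' Metric.sphere 0 1 := by
    ext x; simp [eq_comm]
  rw [himage]
  exact (isCompact_sphere 0 1).image_of_continuousOn
    (continuous_toR4.comp_continuousOn (hFcont.prodMk continuousOn_id))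

theorem norm_snd_sub_norm_fst_le {w : Fin 4 → ℝ} {m : ℝ} (h : ∀ ν ∈ Λ, qf w ν ≤ m) :
    ‖(ofR4 w).2‖ - ‖(ofR4 w).1‖ ≤ m := by
  obtain ⟨F, hF1, -, rfl⟩ := hΛ
  obtain ⟨z, hz, hbz⟩ := exists_norm_eq_one_real_inner_eq_norm (ofR4 w).2
  have hν := h _ ⟨z, hz, rfl⟩
  rw [qf_toR4_right, hbz] at hν
  have hCS := real_inner_le_norm (ofR4 w).1 (F z)
  rw [hF1 z hz, mul_one] at hCS
  linarith

theorem qf_self_le_neg_sq {w : Fin 4 → ℝ} {m : ℝ} (hm : m ≤ 0) (h : ∀ ν ∈ Λ, qf w ν ≤ m) :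
    qf w w ≤ -m ^ 2 := by
  have hle := hΛ.norm_snd_sub_norm_fst_le h
  rw [qf_self]
  nlinarith [norm_nonneg (ofR4 w).1, norm_nonneg (ofR4 w).2]

end IsAcausalCircle

lemma exists_pos_forall_qf_le_neg {Λ K : Set (Fin 4 → ℝ)} (hΛc : IsCompact Λ)
    (hKc : IsCompact K) (hK : K ⊆ invisible Λ) :
    ∃ ε > 0, ∀ x ∈ K, ∀ ν ∈ Λ, qf x ν ≤ -ε := by
  obtain ⟨ε, hε, hle⟩ := (hKc.prod hΛc).exists_forall_le' continuous_qf.neg.continuousOn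
    (a := 0) fun p hp => neg_pos.2 ((hK hp.1).2 p.2 hp.2)
  exact ⟨ε, hε, fun x hx ν hν => le_neg.1 (hle (x, ν) ⟨hx, hν⟩)⟩

/-- For `Λ` an acausal circle and `K ⊆ O₊(Λ)` compact, there is `δ < 1` with
`q(x,y) ≤ δ` for all `x ∈ K` and `y ∈ O₊(Λ)`. -/
theorem stmt3 (Λ : Set (Fin 4 → ℝ)) (hΛ : IsAcausalCircle Λ)
    (K : Set (Fin 4 → ℝ)) (hK : K ⊆ invisible Λ) (hKc : IsCompact K) :
    ∃ δ : ℝ, δ < 1 ∧ ∀ x ∈ K, ∀ y ∈ invisible Λ, qf x y ≤ δ := by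
  obtain ⟨ε, hε, hKΛ⟩ := exists_pos_forall_qf_le_neg hΛ.isCompact hKc hK
  refine ⟨1 - ε ^ 2 / 2, by nlinarith, fun x hx y hy => ?_⟩
  have hw : ∀ ν ∈ Λ, qf (x + y) ν ≤ -ε := fun ν hν => by
    rw [qf_add_left]; linarith [hKΛ x hx ν hν, hy.2 ν hν]
  have hww := hΛ.qf_self_le_neg_sq (by linarith) hw
  rw [qf_add_self, (hK hx).1, hy.1] at hww
  nlinarith
end
end

section
/- Let ν, ν' ∈ ℝ⁴ ∖ {0} with q(ν) = q(ν') = 0, and suppose ν' is not a positive scalar multiple of −ν. Then there exist h₁, h₂ ∈ SL(2,ℝ) such that, writing u := (h₁,h₂)·ν and u' := (h₁,h₂)·ν', one has u₂ + u₄ > 0 and u'₂ + u'₄ > 0. -/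
/-!
Under `ψ`, the null vectors are the nonzero singular `2 × 2` matrices, the action becomes
`N ↦ h₁ N h₂⁻¹`, and `u₂ + u₄` is the `(0,1)` entry. Every nonzero singular matrix is
equivalent to `E = !![0, 1; 0, 0]`, so we may assume `ψ(ν) = E`. The upper unipotents `τ t`
satisfy `τ t * E * τ r = E`, while for any `M` the `(0,1)` entry of `τ t * M * τ r` is
`M₀₁ + t M₁₁ + (M₀₀ + t M₁₀) r`; this takes a positive value unless `M` is a nonpositive
multiple of `E`, which is exactly what the hypothesis on `ν'` excludes.
-/

noncomputable section

abbrev SL2 := Matrix.SpecialLinearGroup (Fin 2) ℝ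

/-- The linear isomorphism `ψ : ℝ⁴ → M₂(ℝ)`. -/
def psiM (x : Fin 4 → ℝ) : Matrix (Fin 2) (Fin 2) ℝ :=
  !![x 0 + x 2, x 1 + x 3; x 3 - x 1, x 0 - x 2]

/-- The inverse of `ψ`. -/
def psiInv (A : Matrix (Fin 2) (Fin 2) ℝ) : Fin 4 → ℝ :=
  ![(A 0 0 + A 1 1) / 2, (A 0 1 - A 1 0) / 2, (A 0 0 - A 1 1) / 2, (A 0 1 + A 1 0) / 2]

/-- The action of `SL(2,ℝ) × SL(2,ℝ)` on `ℝ⁴`: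
`(h₁,h₂)·x = ψ⁻¹(h₁ ψ(x) h₂⁻¹)`. -/
def act (h₁ h₂ : SL2) (x : Fin 4 → ℝ) : Fin 4 → ℝ :=
  psiInv ((h₁ : Matrix (Fin 2) (Fin 2) ℝ) * psiM x * ((h₂⁻¹ : SL2) : Matrix (Fin 2) (Fin 2) ℝ))

open Matrix MatrixGroups

namespace Matrix.SpecialLinearGroup

variable {n R : Type*} [Fintype n] [DecidableEq n] [CommRing R]

theorem coe_inv_mul_coe (g : Matrix.SpecialLinearGroup n R) :
    ((g⁻¹ : Matrix.SpecialLinearGroup n R) : Matrix n n R) * (g : Matrix n n R) = 1 := by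
  rw [← coe_mul, inv_mul_cancel, coe_one]

theorem coe_mul_coe_inv (g : Matrix.SpecialLinearGroup n R) :
    (g : Matrix n n R) * ((g⁻¹ : Matrix.SpecialLinearGroup n R) : Matrix n n R) = 1 := by
  rw [← coe_mul, mul_inv_cancel, coe_one]

theorem coe_mul_mul_coe_injective (g₁ g₂ : Matrix.SpecialLinearGroup n R) :
    Function.Injective fun X : Matrix n n R => (g₁ : Matrix n n R) * X * g₂ :=
  (mul_left_injective_of_inv _ _ (coe_mul_coe_inv g₂)).comp
    (mul_right_injective_of_inv _ _ (coe_inv_mul_coe g₁))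

theorem coe_mul_mul_coe_mul (a b c d : Matrix.SpecialLinearGroup n R) (X : Matrix n n R) :
    ((a * b : Matrix.SpecialLinearGroup n R) : Matrix n n R) * X *
        ((c * d : Matrix.SpecialLinearGroup n R) : Matrix n n R) =
      (a : Matrix n n R) * ((b : Matrix n n R) * X * (c : Matrix n n R)) * (d : Matrix n n R) := by
  simp only [coe_mul, Matrix.mul_assoc]

theorem coe_transvection_zero_one (t : R) :
    (transvection zero_ne_one t : SL(2, R)) = !![1, t; 0, 1] := by
  ext i j; fin_cases i <;> fin_cases j <;> simp [transvection_coe]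

theorem transvection_mul_mul_transvection_apply_zero_one (t r : R)
    (M : Matrix (Fin 2) (Fin 2) R) :
    ((transvection zero_ne_one t : SL(2, R)) * M * (transvection zero_ne_one r : SL(2, R))) 0 1
      = M 0 1 + t * M 1 1 + (M 0 0 + t * M 1 0) * r := by
  rw [coe_transvection_zero_one, coe_transvection_zero_one, eta_fin_two M, mul_fin_two,
    mul_fin_two]
  simp only [of_apply, cons_val', cons_val_zero, cons_val_one, cons_val_fin_one]
  ring

end Matrix.SpecialLinearGroup

open Matrix.SpecialLinearGroup

theorem isCoprime_of_ne_zero_or_ne_zero {K : Type*} [Field K] {a b : K}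
    (h : a ≠ 0 ∨ b ≠ 0) : IsCoprime a b := by
  rcases h with ha | hb
  · exact ⟨a⁻¹, 0, by simp [ha]⟩
  · exact ⟨0, b⁻¹, by simp [hb]⟩

theorem exists_mul_mul_eq_of_det_eq_zero {K : Type*} [Field K]
    {N : Matrix (Fin 2) (Fin 2) K} (hN : N ≠ 0) (hdet : N.det = 0) :
    ∃ g₁ g₂ : SL(2, K),
      (g₁ : Matrix (Fin 2) (Fin 2) K) * N * (g₂ : Matrix (Fin 2) (Fin 2) K) = !![0, 1; 0, 0] := by
  -- Take `k` with a kernel vector of `N` as first column and `k₁` with first column the second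
  -- column of `N * k`; then `N * k = k₁ * !![0, 1; 0, 0]`.
  obtain ⟨v, hv, hNv⟩ := exists_mulVec_eq_zero_iff.mpr hdet
  obtain ⟨k, hk0, hk1⟩ := (isCoprime_of_ne_zero_or_ne_zero (a := v 0) (b := v 1)
    (by contrapose! hv; ext i; fin_cases i <;> simp [hv])).exists_SL2_col 0
  have hcol : ∀ i, (N * k) i 0 = 0 := fun i => by
    simpa [Matrix.mul_apply, Fin.sum_univ_two, mulVec, dotProduct, hk0, hk1] using congrFun hNv i
  obtain ⟨k₁, hk₁0, hk₁1⟩ := (isCoprime_of_ne_zero_or_ne_zero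
    (a := (N * k) 0 1) (b := (N * k) 1 1) (by
      contrapose! hN
      refine mul_left_injective_of_inv _ _ (coe_mul_coe_inv k) ?_
      ext i j; fin_cases i <;> fin_cases j <;> simp [hcol, hN])).exists_SL2_col 0
  have hNk : N * (k : Matrix _ _ K) = (k₁ : Matrix (Fin 2) (Fin 2) K) * !![0, 1; 0, 0] := by
    ext i j; fin_cases i <;> fin_cases j <;> simp [hcol, hk₁0, hk₁1, Matrix.mul_apply]
  refine ⟨k₁⁻¹, k, ?_⟩
  rw [Matrix.mul_assoc, hNk, ← Matrix.mul_assoc, coe_inv_mul_coe, Matrix.one_mul]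

section Ordered

variable {K : Type*} [Field K] [LinearOrder K] [IsStrictOrderedRing K]

theorem exists_pos_add_mul {x y : K} (h : y ≠ 0 ∨ 0 < x) : ∃ r, 0 < x + y * r := by
  rcases h with hy | hx
  · exact ⟨(1 - x) / y, by rw [mul_div_cancel₀ _ hy]; simp⟩
  · exact ⟨0, by simpa⟩

theorem exists_transvection_mul_mul_transvection_apply_zero_one_pos
    {M : Matrix (Fin 2) (Fin 2) K} (hM : ∀ c : K, c ≤ 0 → M ≠ c • !![0, 1; 0, 0]) :
    ∃ t r : K, 0 < ((transvection zero_ne_one t : SL(2, K)) * M *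
      (transvection zero_ne_one r : SL(2, K))) 0 1 := by
  simp only [transvection_mul_mul_transvection_apply_zero_one]
  by_cases hcol : M 0 0 = 0 ∧ M 1 0 = 0
  · obtain ⟨t, ht⟩ := exists_pos_add_mul (x := M 0 1) (y := M 1 1) (by
      by_contra! h
      exact hM (M 0 1) h.2 (by ext i j; fin_cases i <;> fin_cases j <;> simp [hcol, h.1]))
    exact ⟨t, 0, by simpa [mul_comm] using ht⟩
  · obtain ⟨t, ht⟩ : ∃ t, M 0 0 + t * M 1 0 ≠ 0 := by
      by_cases h00 : M 0 0 = 0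
      · exact ⟨1, by simpa [h00] using hcol⟩
      · exact ⟨0, by simpa⟩
    obtain ⟨r, hr⟩ := exists_pos_add_mul (Or.inl ht)
    exact ⟨t, r, hr⟩

theorem exists_mul_mul_apply_zero_one_pos {N N' : Matrix (Fin 2) (Fin 2) K} (hN : N ≠ 0)
    (hdet : N.det = 0) (hN' : ∀ c : K, c ≤ 0 → N' ≠ c • N) :
    ∃ g₁ g₂ : SL(2, K),
      0 < ((g₁ : Matrix (Fin 2) (Fin 2) K) * N * (g₂ : Matrix (Fin 2) (Fin 2) K)) 0 1 ∧
      0 < ((g₁ : Matrix (Fin 2) (Fin 2) K) * N' * (g₂ : Matrix (Fin 2) (Fin 2) K)) 0 1 := by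
  obtain ⟨k₁, k₂, hk⟩ := exists_mul_mul_eq_of_det_eq_zero hN hdet
  have hM : ∀ c : K, c ≤ 0 → (k₁ : Matrix (Fin 2) (Fin 2) K) * N' * (k₂ : Matrix _ _ K) ≠
      c • !![0, 1; 0, 0] :=
    fun c hc h => hN' c hc <| coe_mul_mul_coe_injective k₁ k₂ <| by
      simp only [h, ← hk, Matrix.mul_smul, Matrix.smul_mul]
  obtain ⟨t, r, hpos⟩ := exists_transvection_mul_mul_transvection_apply_zero_one_pos hM
  refine ⟨SpecialLinearGroup.transvection zero_ne_one t * k₁,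
    k₂ * SpecialLinearGroup.transvection zero_ne_one r, ?_, ?_⟩
  · rw [coe_mul_mul_coe_mul, hk, transvection_mul_mul_transvection_apply_zero_one]
    simp
  · rwa [coe_mul_mul_coe_mul]

end Ordered

theorem psiInv_psiM (x : Fin 4 → ℝ) : psiInv (psiM x) = x := by
  funext i
  fin_cases i <;> simp only [psiInv, psiM, of_apply, cons_val', cons_val_zero, cons_val_one,
    cons_val, cons_val_fin_one, Fin.zero_eta, Fin.mk_one, Fin.reduceFinMk] <;> ring

theorem psiM_injective : Function.Injective psiM :=
  Function.LeftInverse.injective psiInv_psiM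

theorem psiM_zero : psiM 0 = 0 := by
  ext i j; fin_cases i <;> fin_cases j <;> simp [psiM]

theorem psiM_smul (c : ℝ) (x : Fin 4 → ℝ) : psiM (c • x) = c • psiM x := by
  ext i j; fin_cases i <;> fin_cases j <;> simp [psiM, mul_add, mul_sub]

theorem det_psiM (x : Fin 4 → ℝ) : (psiM x).det = -qf x x := by
  rw [psiM, det_fin_two_of, qf]; ring

theorem act_one_add_act_three (h₁ h₂ : SL2) (x : Fin 4 → ℝ) :
    act h₁ h₂ x 1 + act h₁ h₂ x 3 =
      ((h₁ : Matrix (Fin 2) (Fin 2) ℝ) * psiM x *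
        ((h₂⁻¹ : SL2) : Matrix (Fin 2) (Fin 2) ℝ)) 0 1 := by
  simp only [act, psiInv, cons_val_one, cons_val_zero, cons_val]
  ring

theorem stmt9_general (ν ν' : Fin 4 → ℝ) (hν0 : ν ≠ 0) (hν'0 : ν' ≠ 0)
    (hν : qf ν ν = 0)
    (hne : ∀ lam : ℝ, 0 < lam → ν' ≠ lam • (-ν)) :
    ∃ h₁ h₂ : SL2,
      0 < act h₁ h₂ ν 1 + act h₁ h₂ ν 3 ∧
      0 < act h₁ h₂ ν' 1 + act h₁ h₂ ν' 3 := by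
  have hN : psiM ν ≠ 0 := fun h => hν0 (psiM_injective (h.trans psiM_zero.symm))
  have hN' : ∀ c : ℝ, c ≤ 0 → psiM ν' ≠ c • psiM ν := by
    intro c hc h
    have hν'c : ν' = c • ν := psiM_injective (h.trans (psiM_smul c ν).symm)
    rcases hc.lt_or_eq with hc | rfl
    · exact hne (-c) (neg_pos.mpr hc) (by rw [hν'c, smul_neg, neg_smul, neg_neg])
    · exact hν'0 (by simpa using hν'c)
  obtain ⟨g₁, g₂, h, h'⟩ :=
    exists_mul_mul_apply_zero_one_pos hN (by rw [det_psiM, hν, neg_zero]) hN'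
  refine ⟨g₁, g₂⁻¹, ?_, ?_⟩ <;> rwa [act_one_add_act_three, inv_inv]

/-- Two boundary rays represented by null vectors `ν, ν'` with `ν'` not a positive multiple
of `-ν` can be simultaneously moved by an element of `SL(2,ℝ) × SL(2,ℝ)` into the open set
`{x : x₂ + x₄ > 0}`. -/
theorem stmt9 (ν ν' : Fin 4 → ℝ) (hν0 : ν ≠ 0) (hν'0 : ν' ≠ 0)
    (hν : qf ν ν = 0) (hν' : qf ν' ν' = 0)
    (hne : ∀ lam : ℝ, 0 < lam → ν' ≠ lam • (-ν)) :
    ∃ h₁ h₂ : SL2,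
      0 < act h₁ h₂ ν 1 + act h₁ h₂ ν 3 ∧
      0 < act h₁ h₂ ν' 1 + act h₁ h₂ ν' 3 :=
  stmt9_general ν ν' hν0 hν'0 hν hne
end
end

section
/- Let M be a locally compact Hausdorff space with a continuous flow φ, and assume (A0): the trapped set K is compact. Then for every compact subset C ⊆ M and every open set V ⊇ K there exists T ≥ 0 such that for all t ≥ T one has φ_t(K₊(C)) ⊆ V and φ_{−t}(K₋(C)) ⊆ V. -/
noncomputable section

variable {M : Type*} [TopologicalSpace M]

/-- The forward trapped set of a flow `φ` in a subset `S`: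
`K₊(S) = {x ∈ S : φ_t(x) ∈ S for all t ≥ 0}`. -/
def Kp (φ : ℝ → M → M) (S : Set M) : Set M :=
  {x ∈ S | ∀ t : ℝ, 0 ≤ t → φ t x ∈ S}

/-- The backward trapped set of a flow `φ` in a subset `S`:
`K₋(S) = {x ∈ S : φ_{-t}(x) ∈ S for all t ≥ 0}`. -/
def Km (φ : ℝ → M → M) (S : Set M) : Set M :=
  {x ∈ S | ∀ t : ℝ, 0 ≤ t → φ (-t) x ∈ S}

/-- The global forward trapped set `K₊ = ⋃ {K₊(C) : C compact}`. -/
def KpGlob (φ : ℝ → M → M) : Set M :=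
  {x | ∃ C : Set M, IsCompact C ∧ x ∈ Kp φ C}

/-- The global backward trapped set `K₋ = ⋃ {K₋(C) : C compact}`. -/
def KmGlob (φ : ℝ → M → M) : Set M :=
  {x | ∃ C : Set M, IsCompact C ∧ x ∈ Km φ C}

/-- The trapped set `K = K₊ ∩ K₋`. -/
def Ktrap (φ : ℝ → M → M) : Set M := KpGlob φ ∩ KmGlob φ

/-- Assumption (A1): whenever `C₁, C₂` are compact and the set of times `t ≥ 0` with
`φ_t(C₁) ∩ C₂ ≠ ∅` is unbounded, `C₁` meets `K₊` and `C₂` meets `K₋`. -/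
def AssumptionA1 (φ : ℝ → M → M) : Prop :=
  ∀ C₁ C₂ : Set M, IsCompact C₁ → IsCompact C₂ →
    ¬ BddAbove {t : ℝ | 0 ≤ t ∧ ((φ t '' C₁) ∩ C₂).Nonempty} →
    (C₁ ∩ KpGlob φ).Nonempty ∧ (C₂ ∩ KmGlob φ).Nonempty

/-- The non-wandering set of the flow `φ`. -/
def NW (φ : ℝ → M → M) : Set M :=
  {x | ∀ V : Set M, IsOpen V → x ∈ V → ∀ T : ℝ, 0 < T →
    ∃ t : ℝ, T ≤ t ∧ ((φ t '' V) ∩ V).Nonempty}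

lemma aux_attract {M : Type*} [TopologicalSpace M] [T2Space M]
    (φ : ℝ → M → M)
    (hφcont : Continuous fun p : ℝ × M => φ p.1 p.2)
    (hφadd : ∀ s t : ℝ, ∀ x : M, φ (s + t) x = φ s (φ t x))
    (C : Set M) (hC : IsCompact C)
    (V : Set M) (hV : IsOpen V) (hKV : Ktrap φ ⊆ V) :
    ∃ T : ℝ, 0 ≤ T ∧ ∀ t : ℝ, T ≤ t → φ t '' Kp φ C ⊆ V := by
  by_contra h
  push_neg at h
  have hcont : ∀ s : ℝ, Continuous (φ s) := fun s =>
    hφcont.comp (continuous_const.prodMk continuous_id)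
  set S : ℕ → Set M := fun n =>
    {y | ∃ t : ℝ, (n : ℝ) ≤ t ∧ ∃ x ∈ Kp φ C, φ t x = y ∧ y ∉ V} with hS
  have hSsub : ∀ n, S n ⊆ C \ V := by
    rintro n y ⟨t, ht, x, hx, rfl, hyV⟩
    exact ⟨hx.2 t (le_trans (Nat.cast_nonneg n) ht), hyV⟩
  have hSne : ∀ n, (S n).Nonempty := by
    intro n
    obtain ⟨t, ht, hnot⟩ := h n (Nat.cast_nonneg n)
    rw [Set.not_subset] at hnot
    obtain ⟨y, ⟨x, hx, rfl⟩, hyV⟩ := hnot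
    exact ⟨φ t x, t, ht, x, hx, rfl, hyV⟩
  have hCVclosed : IsClosed (C \ V) := hC.isClosed.sdiff hV
  have hCV : IsCompact (C \ V) := hC.of_isClosed_subset hCVclosed Set.diff_subset
  have hFsub : ∀ n, closure (S n) ⊆ C \ V := fun n =>
    closure_minimal (hSsub n) hCVclosed
  have hmono : ∀ n : ℕ, S (n + 1) ⊆ S n := by
    rintro n y ⟨t, ht, x, hx, rfl, hyV⟩
    exact ⟨t, le_trans (by exact_mod_cast Nat.le_succ n) ht, x, hx, rfl, hyV⟩
  have hinter : (⋂ n, closure (S n)).Nonempty := by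
    apply IsCompact.nonempty_iInter_of_sequence_nonempty_isCompact_isClosed
      (fun n => closure (S n)) (fun n => closure_mono (hmono n))
      (fun n => (hSne n).closure)
      (hCV.of_isClosed_subset isClosed_closure (hFsub 0))
      (fun n => isClosed_closure)
  obtain ⟨y, hy⟩ := hinter
  have hyn : ∀ n : ℕ, y ∈ closure (S n) := fun n => Set.mem_iInter.1 hy n
  have hyC : y ∈ C \ V := hFsub 0 (hyn 0)
  have key : ∀ (s : ℝ) (n : ℕ), ((n : ℝ) + s ≥ 0) → φ s y ∈ C := by
    intro s n hns
    have himg : φ s '' S n ⊆ C := by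
      rintro z ⟨w, ⟨t, ht, x, hx, rfl, hwV⟩, rfl⟩
      rw [← hφadd s t x]
      exact hx.2 (s + t) (by linarith)
    have : φ s y ∈ closure (φ s '' S n) :=
      image_closure_subset_closure_image (hcont s) ⟨y, hyn n, rfl⟩
    exact closure_minimal himg hC.isClosed this
  have hyKp : y ∈ Kp φ C := by
    refine ⟨hyC.1, fun t ht => key t 0 (by simpa using ht)⟩
  have hyKm : y ∈ Km φ C := by
    refine ⟨hyC.1, fun t ht => key (-t) ⌈t⌉₊ ?_⟩
    have := Nat.le_ceil t
    linarith
  exact hyC.2 (hKV ⟨⟨C, hC, hyKp⟩, ⟨C, hC, hyKm⟩⟩)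

/-- Attraction to the trapped set: under (A0), for every compact `C` and every open
neighborhood `V` of `K`, the sets `φ_t(K₊(C))` and `φ_{-t}(K₋(C))` lie in `V` for all
sufficiently large `t`. -/
theorem stmt10 {M : Type*} [TopologicalSpace M] [T2Space M] [LocallyCompactSpace M]
    (φ : ℝ → M → M)
    (hφcont : Continuous fun p : ℝ × M => φ p.1 p.2)
    (hφ0 : ∀ x : M, φ 0 x = x)
    (hφadd : ∀ s t : ℝ, ∀ x : M, φ (s + t) x = φ s (φ t x))
    (hA0 : IsCompact (Ktrap φ))
    (C : Set M) (hC : IsCompact C)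
    (V : Set M) (hV : IsOpen V) (hKV : Ktrap φ ⊆ V) :
    ∃ T : ℝ, 0 ≤ T ∧ ∀ t : ℝ, T ≤ t →
      φ t '' Kp φ C ⊆ V ∧ φ (-t) '' Km φ C ⊆ V := by
  obtain ⟨T₁, hT₁0, hT₁⟩ := aux_attract φ hφcont hφadd C hC V hV hKV
  set ψ : ℝ → M → M := fun t x => φ (-t) x with hψ
  have hψcont : Continuous fun p : ℝ × M => ψ p.1 p.2 := by
    have : Continuous fun p : ℝ × M => ((-p.1, p.2) : ℝ × M) :=
      (continuous_fst.neg).prodMk continuous_snd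
    exact hφcont.comp this
  have hψadd : ∀ s t : ℝ, ∀ x : M, ψ (s + t) x = ψ s (ψ t x) := by
    intro s t x
    simp only [hψ, neg_add]
    exact hφadd (-s) (-t) x
  have hKmψ : ∀ S : Set M, Km ψ S = Kp φ S := by
    intro S
    ext x
    simp [Km, Kp, hψ, neg_neg]
  have hKψ : Ktrap ψ = Ktrap φ := by
    have h1 : KpGlob ψ = KmGlob φ := rfl
    have h2 : KmGlob ψ = KpGlob φ := by
      simp only [KmGlob, KpGlob, hKmψ]
    rw [Ktrap, h1, h2, Set.inter_comm]; rfl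
  obtain ⟨T₂, hT₂0, hT₂⟩ := aux_attract ψ hψcont hψadd C hC V hV (hKψ ▸ hKV)
  refine ⟨max T₁ T₂, le_trans hT₁0 (le_max_left _ _), fun t ht => ?_⟩
  refine ⟨hT₁ t (le_trans (le_max_left _ _) ht), ?_⟩
  exact hT₂ t (le_trans (le_max_right _ _) ht)
end
end

section
/- Let M be a locally compact Hausdorff space with a continuous flow φ, and assume (A0) and (A1). Then for every compact subset C₀ ⊆ M there exists a compact subset C ⊆ M such that C₀ ∩ K₊ ⊆ K₊(C) and C₀ ∩ K₋ ⊆ K₋(C). -/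
noncomputable section

variable {M : Type*} [TopologicalSpace M]

/-! ### Auxiliary lemmas -/

section Aux

variable {φ : ℝ → M → M}

lemma flow_cancel (hφ0 : ∀ x : M, φ 0 x = x)
    (hφadd : ∀ s t : ℝ, ∀ x : M, φ (s + t) x = φ s (φ t x)) (t : ℝ) (x : M) :
    φ (-t) (φ t x) = x := by
  rw [← hφadd, neg_add_cancel, hφ0]

lemma flow_cancel' (hφ0 : ∀ x : M, φ 0 x = x)
    (hφadd : ∀ s t : ℝ, ∀ x : M, φ (s + t) x = φ s (φ t x)) (t : ℝ) (x : M) :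
    φ t (φ (-t) x) = x := by
  rw [← hφadd, add_neg_cancel, hφ0]

lemma cont_orbit (hφcont : Continuous fun p : ℝ × M => φ p.1 p.2) (x : M) :
    Continuous fun s : ℝ => φ s x :=
  hφcont.comp (continuous_id.prodMk continuous_const)

lemma cont_time (hφcont : Continuous fun p : ℝ × M => φ p.1 p.2) (r : ℝ) :
    Continuous fun y : M => φ r y :=
  hφcont.comp (continuous_const.prodMk continuous_id)

/-- Forward invariance of `K₊`. -/
lemma kpGlob_fwd (hφadd : ∀ s t : ℝ, ∀ x : M, φ (s + t) x = φ s (φ t x))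
    {x : M} (hx : x ∈ KpGlob φ) {r : ℝ} (hr : 0 ≤ r) : φ r x ∈ KpGlob φ := by
  obtain ⟨D, hD, hxD, hxO⟩ := hx
  refine ⟨D, hD, hxO r hr, fun t ht => ?_⟩
  rw [← hφadd]
  exact hxO (t + r) (by linarith)

/-- Backward invariance of `K₋`. -/
lemma kmGlob_bwd (hφadd : ∀ s t : ℝ, ∀ x : M, φ (s + t) x = φ s (φ t x))
    {x : M} (hx : x ∈ KmGlob φ) {r : ℝ} (hr : 0 ≤ r) : φ (-r) x ∈ KmGlob φ := by
  obtain ⟨D, hD, hxD, hxO⟩ := hx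
  refine ⟨D, hD, hxO r hr, fun t ht => ?_⟩
  rw [← hφadd]
  have : -t + -r = -(t + r) := by ring
  rw [this]
  exact hxO (t + r) (by linarith)

/-- Forward invariance of `K₋`. -/
lemma kmGlob_fwd (hφcont : Continuous fun p : ℝ × M => φ p.1 p.2)
    (hφadd : ∀ s t : ℝ, ∀ x : M, φ (s + t) x = φ s (φ t x))
    {x : M} (hx : x ∈ KmGlob φ) {r : ℝ} (hr : 0 ≤ r) : φ r x ∈ KmGlob φ := by
  obtain ⟨D, hD, hxD, hxO⟩ := hx
  refine ⟨D ∪ (fun s : ℝ => φ s x) '' Set.Icc 0 r,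
    hD.union (isCompact_Icc.image (cont_orbit hφcont x)), Or.inr ⟨r, ⟨hr, le_refl r⟩, rfl⟩,
    fun t ht => ?_⟩
  have heq : φ (-t) (φ r x) = φ (r - t) x := by
    rw [← hφadd]; ring_nf
  rw [heq]
  rcases le_or_gt t r with h | h
  · exact Or.inr ⟨r - t, ⟨by linarith, by linarith⟩, rfl⟩
  · left
    have : r - t = -(t - r) := by ring
    rw [this]
    exact hxO (t - r) (by linarith)

/-- A forward-trapped point visits any neighborhood of the trapped set at arbitrarily
late times. -/
lemma trap_visits [T2Space M]
    (hφcont : Continuous fun p : ℝ × M => φ p.1 p.2)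
    (hφ0 : ∀ x : M, φ 0 x = x)
    (hφadd : ∀ s t : ℝ, ∀ x : M, φ (s + t) x = φ s (φ t x))
    {G : Set M} (hG : IsOpen G) (hKG : Ktrap φ ⊆ G)
    {D : Set M} (hD : IsCompact D) {x : M} (hx : x ∈ Kp φ D)
    {t₀ : ℝ} (ht₀ : 0 ≤ t₀) :
    ∃ s : ℝ, t₀ ≤ s ∧ φ s x ∈ G := by
  by_contra hcon
  push_neg at hcon
  -- the family of closures of orbit tails
  set A : ℝ → Set M := fun T => closure ((fun s : ℝ => φ s x) '' Set.Ici (max T t₀)) with hA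
  have hAsubD : ∀ T, A T ⊆ D := by
    intro T
    apply closure_minimal _ hD.isClosed
    rintro - ⟨s, hs, rfl⟩
    exact hx.2 s (le_trans (le_trans ht₀ (le_max_right T t₀)) hs)
  have hAne : ∀ T, (A T).Nonempty :=
    fun T => ⟨φ (max T t₀) x, subset_closure ⟨max T t₀, Set.mem_Ici.mpr le_rfl, rfl⟩⟩
  have hAcl : ∀ T, IsClosed (A T) := fun T => isClosed_closure
  have hAc : ∀ T, IsCompact (A T) := fun T => hD.of_isClosed_subset (hAcl T) (hAsubD T)
  have hAanti : ∀ T T' : ℝ, T ≤ T' → A T' ⊆ A T := by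
    intro T T' h
    apply closure_mono
    apply Set.image_mono
    exact Set.Ici_subset_Ici.mpr (max_le_max h (le_refl t₀))
  have hdir : Directed (· ⊇ ·) A := by
    intro T T'
    exact ⟨max T T', hAanti _ _ (le_max_left _ _), hAanti _ _ (le_max_right _ _)⟩
  obtain ⟨y, hy⟩ := IsCompact.nonempty_iInter_of_directed_nonempty_isCompact_isClosed
    A hdir hAne hAc hAcl
  have hymem : ∀ T, y ∈ A T := fun T => Set.mem_iInter.mp hy T
  -- the full orbit of y stays in every A T
  have hyorb : ∀ r T : ℝ, φ r y ∈ A T := by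
    intro r T
    have h1 : y ∈ A (max (T - r) (t₀ - r)) := hymem _
    have h2 : φ r y ∈ (fun z => φ r z) '' A (max (T - r) (t₀ - r)) :=
      Set.mem_image_of_mem _ h1
    have h3 : (fun z => φ r z) '' A (max (T - r) (t₀ - r)) ⊆ A T := by
      refine subset_trans (image_closure_subset_closure_image (cont_time hφcont r)) ?_
      apply closure_mono
      rintro - ⟨-, ⟨s, hs, rfl⟩, rfl⟩
      have hsmem : max (max (T - r) (t₀ - r)) t₀ ≤ s := Set.mem_Ici.mp hs
      have hT : T - r ≤ s :=
        le_trans (le_trans (le_max_left _ _) (le_max_left _ _)) hsmem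
      have ht0' : t₀ - r ≤ s :=
        le_trans (le_trans (le_max_right _ _) (le_max_left _ _)) hsmem
      exact ⟨r + s, Set.mem_Ici.mpr (max_le (by linarith) (by linarith)), hφadd r s x⟩
    exact h3 h2
  -- y is in the trapped set
  have hyK : y ∈ Ktrap φ := by
    constructor
    · exact ⟨A t₀, hAc t₀, hymem t₀, fun t ht => hyorb t t₀⟩
    · exact ⟨A t₀, hAc t₀, hymem t₀, fun t ht => hyorb (-t) t₀⟩
  -- but y avoids G
  have hyG : y ∉ G := by
    have : A t₀ ⊆ Gᶜ := by
      apply closure_minimal _ hG.isClosed_compl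
      rintro - ⟨s, hs, rfl⟩
      exact hcon s (le_trans (le_max_right t₀ t₀) (by simpa using hs))
    exact this (hymem t₀)
  exact hyG (hKG hyK)

end Aux

section Rev

variable {φ : ℝ → M → M}

lemma kp_rev (S : Set M) : Kp (fun t x => φ (-t) x) S = Km φ S := rfl

lemma kpGlob_rev : KpGlob (fun t x => φ (-t) x) = KmGlob φ := rfl

lemma kmGlob_rev : KmGlob (fun t x => φ (-t) x) = KpGlob φ := by
  unfold KmGlob KpGlob Km Kp
  simp only [neg_neg]

lemma ktrap_rev : Ktrap (fun t x => φ (-t) x) = Ktrap φ := by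
  unfold Ktrap
  rw [kpGlob_rev, kmGlob_rev, Set.inter_comm]

lemma a1_rev (hφ0 : ∀ x : M, φ 0 x = x)
    (hφadd : ∀ s t : ℝ, ∀ x : M, φ (s + t) x = φ s (φ t x))
    (hA1 : AssumptionA1 φ) : AssumptionA1 (fun t x => φ (-t) x) := by
  intro C₁ C₂ h₁ h₂ hub
  have hset : {t : ℝ | 0 ≤ t ∧ (((fun t x => φ (-t) x) t '' C₁) ∩ C₂).Nonempty} =
      {t : ℝ | 0 ≤ t ∧ ((φ t '' C₂) ∩ C₁).Nonempty} := by
    ext t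
    simp only [Set.mem_setOf_eq]
    constructor
    · rintro ⟨ht, y, ⟨z, hz, rfl⟩, hy₂⟩
      exact ⟨ht, z, ⟨φ (-t) z, hy₂, flow_cancel' hφ0 hφadd t z⟩, hz⟩
    · rintro ⟨ht, y, ⟨z, hz, rfl⟩, hy₁⟩
      exact ⟨ht, φ (-t) (φ t z), ⟨φ t z, hy₁, rfl⟩, by rw [flow_cancel hφ0 hφadd]; exact hz⟩
  rw [hset] at hub
  obtain ⟨hp, hm⟩ := hA1 C₂ C₁ h₂ h₁ hub
  constructor
  · rw [kpGlob_rev]; exact hm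
  · rw [kmGlob_rev]; exact hp

end Rev

/-- Main lemma: a uniform compact set containing all forward orbits of forward-trapped
points of a compact set. -/
lemma half_bound {M : Type*} [TopologicalSpace M] [T2Space M] [LocallyCompactSpace M]
    (φ : ℝ → M → M)
    (hφcont : Continuous fun p : ℝ × M => φ p.1 p.2)
    (hφ0 : ∀ x : M, φ 0 x = x)
    (hφadd : ∀ s t : ℝ, ∀ x : M, φ (s + t) x = φ s (φ t x))
    (hA0 : IsCompact (Ktrap φ))
    (hA1 : AssumptionA1 φ)
    (C₀ : Set M) (hC₀ : IsCompact C₀) :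
    ∃ C : Set M, IsCompact C ∧ C₀ ⊆ C ∧
      ∀ x ∈ C₀ ∩ KpGlob φ, ∀ t : ℝ, 0 ≤ t → φ t x ∈ C := by
  classical
  -- reversed flow
  set ψ : ℝ → M → M := fun t x => φ (-t) x with hψdef
  have hψcont : Continuous fun p : ℝ × M => ψ p.1 p.2 :=
    hφcont.comp ((continuous_neg.comp continuous_fst).prodMk continuous_snd)
  have hψ0 : ∀ x : M, ψ 0 x = x := by intro x; show φ (-0) x = x; rw [neg_zero, hφ0]
  have hψadd : ∀ s t : ℝ, ∀ x : M, ψ (s + t) x = ψ s (ψ t x) := by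
    intro s t x
    show φ (-(s + t)) x = φ (-s) (φ (-t) x)
    rw [neg_add]
    exact hφadd _ _ _
  -- a compact neighborhood of the trapped set
  obtain ⟨W, hWc, hKW⟩ := exists_compact_superset hA0
  set E : Set M := C₀ ∪ W with hE
  have hEc : IsCompact E := hC₀.union hWc
  -- tower of compact sets
  have hstep : ∀ A : Set M, IsCompact A → ∃ B : Set M,
      IsCompact B ∧
        A ∪ ((fun p : ℝ × M => φ p.1 p.2) '' ((Set.Icc (-1 : ℝ) 1) ×ˢ A)) ⊆ interior B :=
    fun A hA => exists_compact_superset (hA.union ((isCompact_Icc.prod hA).image hφcont))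
  set F : Set M → Set M := fun A => if h : IsCompact A then (hstep A h).choose else ∅ with hF
  set V : ℕ → Set M := fun k => F^[k] E with hVdef
  have hV0 : V 0 = E := rfl
  have hVsucc : ∀ k, V (k + 1) = F (V k) := fun k => Function.iterate_succ_apply' F k E
  have hVc : ∀ k, IsCompact (V k) := by
    intro k
    induction k with
    | zero => exact hEc
    | succ k ih =>
      rw [hVsucc, hF]
      simp only [dif_pos ih]
      exact (hstep _ ih).choose_spec.1
  have hVeq : ∀ k, V (k + 1) = (hstep (V k) (hVc k)).choose := by
    intro k
    rw [hVsucc, hF]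
    simp only [dif_pos (hVc k)]
  have hVint : ∀ k, V k ⊆ interior (V (k + 1)) := by
    intro k
    have h2 := (hstep (V k) (hVc k)).choose_spec.2
    rw [← hVeq k] at h2
    exact subset_trans Set.subset_union_left h2
  have hVstep : ∀ k, ∀ x ∈ V k, ∀ t : ℝ, |t| ≤ 1 → φ t x ∈ V (k + 1) := by
    intro k x hx t ht
    have h2 := (hstep (V k) (hVc k)).choose_spec.2
    rw [← hVeq k] at h2
    have : φ t x ∈ (fun p : ℝ × M => φ p.1 p.2) '' ((Set.Icc (-1 : ℝ) 1) ×ˢ (V k)) :=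
      ⟨(t, x), ⟨abs_le.mp ht, hx⟩, rfl⟩
    exact interior_subset (h2 (Or.inr this))
  have hVmono : ∀ j k : ℕ, j ≤ k → V j ⊆ V k := by
    intro j k h
    induction k with
    | zero => rw [Nat.le_zero.mp h]
    | succ k ih =>
      rcases Nat.lt_or_ge j (k + 1) with h' | h'
      · exact subset_trans (ih (Nat.lt_succ_iff.mp h')) (subset_trans (hVint k) interior_subset)
      · rw [Nat.le_antisymm h h']
  -- the key flow bound for the tower
  have hVflow : ∀ (m : ℕ) (k : ℕ) (x : M), x ∈ V k → ∀ t : ℝ, |t| ≤ (m : ℝ) →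
      φ t x ∈ V (k + m) := by
    intro m
    induction m with
    | zero =>
      intro k x hx t ht
      have h0 : t = 0 := abs_eq_zero.mp (le_antisymm (by simpa using ht) (abs_nonneg t))
      rw [h0, hφ0]
      simpa using hx
    | succ m ih =>
      intro k x hx t ht
      have hm0 : (0 : ℝ) ≤ (m : ℝ) := Nat.cast_nonneg m
      have hcast : ((m + 1 : ℕ) : ℝ) = (m : ℝ) + 1 := by push_cast; ring
      rw [hcast] at ht
      obtain ⟨htl, htr⟩ := abs_le.mp ht
      set s : ℝ := min (m : ℝ) (max (-(m : ℝ)) t) with hs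
      have hs_abs : |s| ≤ (m : ℝ) := by
        rw [abs_le]
        constructor
        · exact le_min (by linarith) (le_max_left _ _)
        · exact min_le_left _ _
      have hts : |t - s| ≤ 1 := by
        rcases le_or_gt t (-(m : ℝ)) with h1 | h1
        · have hmax : max (-(m : ℝ)) t = -(m : ℝ) := max_eq_left h1
          have hmin : s = -(m : ℝ) := by rw [hs, hmax, min_eq_right (by linarith)]
          rw [hmin, abs_le]
          constructor <;> linarith
        · rcases le_or_gt t (m : ℝ) with h2 | h2
          · have hmax : max (-(m : ℝ)) t = t := max_eq_right (le_of_lt h1)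
            have hmin : s = t := by rw [hs, hmax, min_eq_right h2]
            rw [hmin]
            simp
          · have hmax : max (-(m : ℝ)) t = t := max_eq_right (by linarith)
            have hmin : s = (m : ℝ) := by rw [hs, hmax, min_eq_left (le_of_lt h2)]
            rw [hmin, abs_le]
            constructor <;> linarith
      have h1 : φ s x ∈ V (k + m) := ih k x hx s hs_abs
      have h2 : φ (t - s) (φ s x) ∈ V (k + m + 1) := hVstep (k + m) _ h1 (t - s) hts
      have heq : φ (t - s) (φ s x) = φ t x := by rw [← hφadd, sub_add_cancel]
      rw [heq] at h2
      exact h2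
  -- trapped set inside interior of V 1
  have hKtrapV1 : Ktrap φ ⊆ interior (V 1) := by
    intro y hy
    apply hVint 0
    rw [hV0]
    exact Or.inr (interior_subset (hKW hy))
  -- main claim
  have hclaim : ∃ N : ℕ, ∀ x, x ∈ C₀ → x ∈ KpGlob φ → ∀ t : ℝ, 0 ≤ t → φ t x ∈ V N := by
    by_contra hcon
    push_neg at hcon
    have hfail : ∀ N : ℕ, ∃ x : M, x ∈ C₀ ∧ x ∈ KpGlob φ ∧ ∃ t : ℝ, 0 ≤ t ∧
        φ t x ∉ V (N + 1) := by
      intro N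
      obtain ⟨x, hx1, hx2, t, ht1, ht2⟩ := hcon (N + 1)
      exact ⟨x, hx1, hx2, t, ht1, ht2⟩
    choose x hxC hxK t ht0 hesc using hfail
    have hxKp : ∀ k : ℕ, ∃ D : Set M, IsCompact D ∧ x k ∈ Kp φ D := fun k => hxK k
    choose D hDc hxD using hxKp
    have hxV0 : ∀ k : ℕ, x k ∈ V 0 := fun k => Or.inl (hxC k)
    -- return times
    have hbex : ∀ k : ℕ, ∃ b : ℝ, (t k ≤ b ∧ φ b (x k) ∈ V 1) ∧
        ∀ s, t k ≤ s → s < b → φ s (x k) ∉ V 1 := by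
      intro k
      set R : Set ℝ := {s : ℝ | t k ≤ s ∧ φ s (x k) ∈ V 1} with hR
      have hRne : R.Nonempty := by
        obtain ⟨s, hs1, hs2⟩ := trap_visits hφcont hφ0 hφadd isOpen_interior hKtrapV1
          (hDc k) (hxD k) (ht0 k)
        exact ⟨s, hs1, interior_subset hs2⟩
      have hRcl : IsClosed R := by
        have : R = Set.Ici (t k) ∩ (fun s : ℝ => φ s (x k)) ⁻¹' (V 1) := rfl
        rw [this]
        exact isClosed_Ici.inter ((hVc 1).isClosed.preimage (cont_orbit hφcont (x k)))
      have hRbd : BddBelow R := ⟨t k, fun s hs => hs.1⟩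
      refine ⟨sInf R, hRcl.csInf_mem hRne hRbd, ?_⟩
      intro s hs1 hs2 hmem
      exact absurd (csInf_le hRbd ⟨hs1, hmem⟩) (not_le.mpr hs2)
    choose b hb hbmin using hbex
    -- time lower bounds from the tower
    have htk : ∀ k : ℕ, (k : ℝ) < t k := by
      intro k
      by_contra h
      push_neg at h
      have habs : |t k| ≤ ((k + 1 : ℕ) : ℝ) := by
        rw [abs_of_nonneg (ht0 k)]; push_cast; linarith
      have := hVflow (k + 1) 0 (x k) (hxV0 k) (t k) habs
      rw [Nat.zero_add] at this
      exact hesc k this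
    have hgap : ∀ k : ℕ, (k : ℝ) < b k - t k := by
      intro k
      by_contra h
      push_neg at h
      have habs : |t k - b k| ≤ (k : ℝ) := by
        rw [abs_of_nonpos (by linarith [(hb k).1])]
        linarith
      have h2 := hVflow k 1 (φ (b k) (x k)) (hb k).2 (t k - b k) habs
      have h3 : φ (t k - b k) (φ (b k) (x k)) = φ (t k) (x k) := by
        rw [← hφadd, sub_add_cancel]
      rw [h3] at h2
      have h4 : 1 + k = k + 1 := Nat.add_comm 1 k
      rw [h4] at h2
      exact hesc k h2
    -- the return points and their closure
    set q : ℕ → M := fun k => φ (b k) (x k) with hq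
    set Q : Set M := closure (Set.range q) with hQdef
    have hQV1 : Q ⊆ V 1 :=
      closure_minimal (Set.range_subset_iff.mpr fun k => (hb k).2) (hVc 1).isClosed
    have hQc : IsCompact Q := (hVc 1).of_isClosed_subset isClosed_closure hQV1
    -- unbounded transition times from C₀ to Q
    have hub : ¬ BddAbove {τ : ℝ | 0 ≤ τ ∧ ((φ τ '' C₀) ∩ Q).Nonempty} := by
      rintro ⟨c, hc⟩
      obtain ⟨k, hk⟩ := exists_nat_gt c
      have hmem : b k ∈ {τ : ℝ | 0 ≤ τ ∧ ((φ τ '' C₀) ∩ Q).Nonempty} :=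
        ⟨le_trans (ht0 k) (hb k).1,
          ⟨q k, ⟨x k, hxC k, rfl⟩, subset_closure (Set.mem_range_self k)⟩⟩
      have h1 : b k ≤ c := hc hmem
      have h2 : (k : ℝ) < b k := lt_of_lt_of_le (htk k) (hb k).1
      linarith
    obtain ⟨-, w, hwQ, hwKm⟩ := hA1 C₀ Q hC₀ hQc hub
    by_cases hw : w ∈ Set.range q
    · -- w is an actual return point: its orbit lies in the compact invariant trapped set
      obtain ⟨k, rfl⟩ := hw
      have hbk0 : 0 ≤ b k := le_trans (ht0 k) (hb k).1
      have hxkm : x k ∈ KmGlob φ := by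
        have h1 := kmGlob_bwd hφadd hwKm hbk0
        have h2 : φ (-(b k)) (q k) = x k := flow_cancel hφ0 hφadd (b k) (x k)
        rwa [h2] at h1
      have h1 : φ (t k) (x k) ∈ Ktrap φ :=
        ⟨kpGlob_fwd hφadd (hxK k) (ht0 k), kmGlob_fwd hφcont hφadd hxkm (ht0 k)⟩
      have h2 : φ (t k) (x k) ∈ V (k + 1) :=
        hVmono 0 (k + 1) (Nat.zero_le _) (Or.inr (interior_subset (hKW h1)))
      exact hesc k h2
    · -- w is a genuine cluster point: its backward orbit avoids interior (V 1)
      have havoid : ∀ u : ℝ, 0 < u → φ (-u) w ∉ interior (V 1) := by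
        intro u hu
        obtain ⟨N, hN⟩ := exists_nat_ge u
        have hwcl : w ∈ closure (q '' {k : ℕ | N ≤ k}) := by
          have hsplit : Set.range q = q '' Set.Iio N ∪ q '' {k : ℕ | N ≤ k} := by
            rw [← Set.image_union]
            have : Set.Iio N ∪ {k : ℕ | N ≤ k} = Set.univ := by
              ext k
              simp only [Set.mem_union, Set.mem_Iio, Set.mem_setOf_eq, Set.mem_univ, iff_true]
              exact lt_or_ge k N
            rw [this, Set.image_univ]
          have hQsplit : Q = closure (q '' Set.Iio N) ∪ closure (q '' {k : ℕ | N ≤ k}) := by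
            rw [hQdef, hsplit, closure_union]
          have hfin : IsClosed (q '' Set.Iio N) := ((Set.finite_Iio N).image q).isClosed
          rw [hQsplit, hfin.closure_eq] at hwQ
          rcases hwQ with h | h
          · exact absurd (Set.image_subset_range q _ h) hw
          · exact h
        have himg : (fun y => φ (-u) y) '' (q '' {k : ℕ | N ≤ k}) ⊆ (interior (V 1))ᶜ := by
          rintro - ⟨-, ⟨k, hkN, rfl⟩, rfl⟩
          have h1 : φ (-u) (q k) = φ (b k - u) (x k) := by
            show φ (-u) (φ (b k) (x k)) = φ (b k - u) (x k)
            rw [← hφadd]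
            have harg : -u + b k = b k - u := by ring
            rw [harg]
          have hNk : (N : ℝ) ≤ (k : ℝ) := Nat.cast_le.mpr hkN
          have h2 : t k ≤ b k - u := by
            have := hgap k
            linarith
          have h3 : b k - u < b k := by linarith
          show φ (-u) (q k) ∈ (interior (V 1))ᶜ
          rw [h1]
          intro hmem
          exact hbmin k _ h2 h3 (interior_subset hmem)
        have hcont' : Continuous fun y : M => φ (-u) y := cont_time hφcont (-u)
        have h4 : φ (-u) w ∈ closure ((fun y => φ (-u) y) '' (q '' {k : ℕ | N ≤ k})) :=
          image_closure_subset_closure_image hcont' ⟨w, hwcl, rfl⟩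
        have h5 : closure ((fun y => φ (-u) y) '' (q '' {k : ℕ | N ≤ k})) ⊆
            (interior (V 1))ᶜ :=
          closure_minimal himg isOpen_interior.isClosed_compl
        exact h5 h4
      -- but w is backward trapped, so its backward orbit must visit interior (V 1)
      obtain ⟨Dw, hDwc, hwD⟩ := hwKm
      have hKψ : Ktrap ψ ⊆ interior (V 1) := by
        rw [hψdef, ktrap_rev]
        exact hKtrapV1
      have hwDψ : w ∈ Kp ψ Dw := hwD
      obtain ⟨s, hs1, hs2⟩ := trap_visits hψcont hψ0 hψadd isOpen_interior hKψ
        hDwc hwDψ (zero_le_one)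
      exact havoid s (lt_of_lt_of_le one_pos hs1) hs2
  obtain ⟨N, hN⟩ := hclaim
  refine ⟨V N, hVc N, fun y hy => hVmono 0 N (Nat.zero_le _) (Or.inl hy), ?_⟩
  rintro x ⟨hx1, hx2⟩ t ht
  exact hN x hx1 hx2 t ht

/-- Under (A0) and (A1), for every compact `C₀` there is a compact `C` with
`C₀ ∩ K₊ ⊆ K₊(C)` and `C₀ ∩ K₋ ⊆ K₋(C)`. -/
theorem stmt11 {M : Type*} [TopologicalSpace M] [T2Space M] [LocallyCompactSpace M]
    (φ : ℝ → M → M)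
    (hφcont : Continuous fun p : ℝ × M => φ p.1 p.2)
    (hφ0 : ∀ x : M, φ 0 x = x)
    (hφadd : ∀ s t : ℝ, ∀ x : M, φ (s + t) x = φ s (φ t x))
    (hA0 : IsCompact (Ktrap φ))
    (hA1 : AssumptionA1 φ)
    (C₀ : Set M) (hC₀ : IsCompact C₀) :
    ∃ C : Set M, IsCompact C ∧
      C₀ ∩ KpGlob φ ⊆ Kp φ C ∧ C₀ ∩ KmGlob φ ⊆ Km φ C := by
  set ψ : ℝ → M → M := fun t x => φ (-t) x with hψdef
  have hψcont : Continuous fun p : ℝ × M => ψ p.1 p.2 :=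
    hφcont.comp ((continuous_neg.comp continuous_fst).prodMk continuous_snd)
  have hψ0 : ∀ x : M, ψ 0 x = x := by intro x; show φ (-0) x = x; rw [neg_zero, hφ0]
  have hψadd : ∀ s t : ℝ, ∀ x : M, ψ (s + t) x = ψ s (ψ t x) := by
    intro s t x
    show φ (-(s + t)) x = φ (-s) (φ (-t) x)
    rw [neg_add]
    exact hφadd _ _ _
  have hA0ψ : IsCompact (Ktrap ψ) := by rw [hψdef, ktrap_rev]; exact hA0
  have hA1ψ : AssumptionA1 ψ := a1_rev hφ0 hφadd hA1
  obtain ⟨C₁, hC₁c, hC₁sub, hC₁⟩ := half_bound φ hφcont hφ0 hφadd hA0 hA1 C₀ hC₀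
  obtain ⟨C₂, hC₂c, hC₂sub, hC₂⟩ := half_bound ψ hψcont hψ0 hψadd hA0ψ hA1ψ C₀ hC₀
  refine ⟨C₁ ∪ C₂, hC₁c.union hC₂c, ?_, ?_⟩
  · rintro x ⟨hx0, hxp⟩
    exact ⟨Or.inl (hC₁sub hx0), fun s hs => Or.inl (hC₁ x ⟨hx0, hxp⟩ s hs)⟩
  · rintro x ⟨hx0, hxm⟩
    have hxm' : x ∈ KpGlob ψ := by rw [hψdef, kpGlob_rev]; exact hxm
    exact ⟨Or.inr (hC₂sub hx0), fun s hs => Or.inr (hC₂ x ⟨hx0, hxm'⟩ s hs)⟩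

end
end

section
/- Let M be a locally compact Hausdorff space with a continuous flow φ, and assume (A0) and (A1). Then for every compact subset C₀ ⊆ M and every open set V ⊇ K there exists T ≥ 0 such that for all t ≥ T one has φ_t(C₀ ∩ K₊) ⊆ V and φ_{−t}(C₀ ∩ K₋) ⊆ V. -/
noncomputable section

variable {M : Type*} [TopologicalSpace M]

open Filter Topology

/-- `K₊(S)` is closed whenever `S` is closed. -/
lemma kp_isClosed (φ : ℝ → M → M)
    (hφcont : Continuous fun p : ℝ × M => φ p.1 p.2)
    {S : Set M} (hS : IsClosed S) : IsClosed (Kp φ S) := by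
  have hKp : Kp φ S = S ∩ ⋂ t ∈ Set.Ici (0:ℝ), (fun x => φ t x) ⁻¹' S := by
    ext x
    simp [Kp]
  rw [hKp]
  refine hS.inter (isClosed_biInter fun t _ => hS.preimage ?_)
  exact hφcont.comp (continuous_const.prodMk continuous_id)

/-- Pointwise convergence to the trapped set: every forward-trapped orbit
eventually enters any open neighborhood of `K`. -/
lemma pointwise_forward [T2Space M] (φ : ℝ → M → M)
    (hφcont : Continuous fun p : ℝ × M => φ p.1 p.2)
    (_hφ0 : ∀ x : M, φ 0 x = x)
    (hφadd : ∀ s t : ℝ, ∀ x : M, φ (s + t) x = φ s (φ t x))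
    {x : M} (hx : x ∈ KpGlob φ) {U : Set M} (hU : IsOpen U) (hKU : Ktrap φ ⊆ U) :
    ∃ T : ℝ, ∀ r : ℝ, T ≤ r → φ r x ∈ U := by
  obtain ⟨C, hC, hxC, hxorb⟩ := hx
  by_contra h
  push_neg at h
  set F := Filter.map (fun r => φ r x) (atTop : Filter ℝ) with hF
  have hfreq : ∃ᶠ y in F, y ∈ C ∩ Uᶜ := by
    rw [hF, Filter.frequently_map, Filter.frequently_atTop]
    intro a
    obtain ⟨r, hr, hrU⟩ := h (max a 0)
    exact ⟨r, le_trans (le_max_left _ _) hr,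
      ⟨hxorb r (le_trans (le_max_right _ _) hr), hrU⟩⟩
  have hne : (F ⊓ 𝓟 (C ∩ Uᶜ)).NeBot := Filter.frequently_iff_neBot.mp hfreq
  have hcomp : IsCompact (C ∩ Uᶜ) := hC.inter_right hU.isClosed_compl
  obtain ⟨w, hwmem, hwcl⟩ := hcomp.exists_clusterPt (inf_le_right : F ⊓ 𝓟 (C ∩ Uᶜ) ≤ _)
  have hwF : ClusterPt w F := hwcl.mono inf_le_left
  -- every point on the full orbit of w lies in C
  have key : ∀ s : ℝ, φ s w ∈ C := by
    intro s
    have hcont : ContinuousAt (fun y => φ s y) w :=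
      (hφcont.comp (continuous_const.prodMk continuous_id)).continuousAt
    have hmap : ClusterPt (φ s w) (Filter.map (fun y => φ s y) F) :=
      hwF.map hcont tendsto_map
    have hmap' : ClusterPt (φ s w) (Filter.map (fun r => φ s (φ r x)) (atTop : Filter ℝ)) := by
      rwa [hF, Filter.map_map] at hmap
    have hle : Filter.map (fun r => φ s (φ r x)) (atTop : Filter ℝ) ≤ 𝓟 C := by
      rw [Filter.le_principal_iff, Filter.mem_map]
      filter_upwards [Filter.eventually_ge_atTop (-s)] with r hr
      have : φ s (φ r x) = φ (s + r) x := (hφadd s r x).symm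
      rw [Set.mem_preimage, this]
      exact hxorb (s + r) (by linarith)
    have : φ s w ∈ closure C := by
      rw [mem_closure_iff_clusterPt]
      exact hmap'.mono hle
    rwa [hC.isClosed.closure_eq] at this
  have hwK : w ∈ Ktrap φ := by
    have hwC : w ∈ C := hwmem.1
    exact ⟨⟨C, hC, hwC, fun t _ => key t⟩, ⟨C, hC, hwC, fun t _ => key (-t)⟩⟩
  exact hwmem.2 (hKU hwK)

/-- Main half-lemma: forward trapped points leave any compact set towards `V ⊇ K`
uniformly. -/
lemma forward_half {M : Type*} [TopologicalSpace M] [T2Space M] [LocallyCompactSpace M]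
    (φ : ℝ → M → M)
    (hφcont : Continuous fun p : ℝ × M => φ p.1 p.2)
    (hφ0 : ∀ x : M, φ 0 x = x)
    (hφadd : ∀ s t : ℝ, ∀ x : M, φ (s + t) x = φ s (φ t x))
    (hA0 : IsCompact (Ktrap φ))
    (hA1 : AssumptionA1 φ)
    (C₀ : Set M) (hC₀ : IsCompact C₀)
    (V : Set M) (hV : IsOpen V) (hKV : Ktrap φ ⊆ V) :
    ∃ T : ℝ, 0 ≤ T ∧ ∀ t : ℝ, T ≤ t → φ t '' (C₀ ∩ KpGlob φ) ⊆ V := by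
  obtain ⟨L, hLcomp, hKL, hLV⟩ := exists_compact_between hA0 hV hKV
  set U := interior L with hUdef
  have hUopen : IsOpen U := isOpen_interior
  have hclUL : closure U ⊆ L := closure_minimal interior_subset hLcomp.isClosed
  have hUcomp : IsCompact (closure U) := hLcomp.of_isClosed_subset isClosed_closure hclUL
  have hUV : closure U ⊆ V := hclUL.trans hLV
  set E := closure U \ U with hEdef
  have hEcomp : IsCompact E := hUcomp.diff hUopen
  set C₂ := E ∩ Kp φ (closure U) with hC₂def
  have hC₂comp : IsCompact C₂ := hEcomp.inter_right (kp_isClosed φ hφcont isClosed_closure)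
  have hC₂Km : ¬ (C₂ ∩ KmGlob φ).Nonempty := by
    rintro ⟨z, ⟨hzE, hzKp⟩, hzKm⟩
    have : z ∈ Ktrap φ := ⟨⟨closure U, hUcomp, hzKp⟩, hzKm⟩
    exact hzE.2 (hKL this)
  have hBdd : BddAbove {s : ℝ | 0 ≤ s ∧ ((φ s '' C₀) ∩ C₂).Nonempty} := by
    by_contra hB
    exact hC₂Km (hA1 C₀ C₂ hC₀ hC₂comp hB).2
  obtain ⟨R, hR⟩ := hBdd
  refine ⟨max R 0 + 1, by positivity, ?_⟩
  intro t ht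
  rintro y ⟨x, ⟨hxC₀, hxΓ⟩, rfl⟩
  by_contra hyV
  have htpos : (0:ℝ) ≤ t := le_trans (by positivity) ht
  obtain ⟨Tx, hTx⟩ := pointwise_forward φ hφcont hφ0 hφadd hxΓ hUopen hKL
  set Tx' := max Tx t with hTx'def
  set S := {r ∈ Set.Icc t Tx' | φ r x ∉ U} with hSdef
  have hcontx : Continuous fun r : ℝ => φ r x :=
    hφcont.comp (continuous_id.prodMk continuous_const)
  have htS : t ∈ S := by
    refine ⟨⟨le_refl t, le_max_right _ _⟩, fun hUt => hyV (hLV (interior_subset hUt))⟩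
  have hSclosed : IsClosed S := by
    rw [hSdef]
    exact (isClosed_Icc.inter (hUopen.isClosed_compl.preimage hcontx) : IsClosed
      (Set.Icc t Tx' ∩ (fun r : ℝ => φ r x) ⁻¹' Uᶜ))
  have hSbdd : BddAbove S := BddAbove.mono (fun r hr => hr.1) bddAbove_Icc
  set s := sSup S with hsdef
  have hsS : s ∈ S := hSclosed.csSup_mem ⟨t, htS⟩ hSbdd
  have hts : t ≤ s := hsS.1.1
  have hgt : ∀ r : ℝ, s < r → φ r x ∈ U := by
    intro r hr
    by_cases hrT : r ≤ Tx'
    · by_contra hrU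
      have hrS : r ∈ S := ⟨⟨le_trans hts hr.le, hrT⟩, hrU⟩
      exact absurd (le_csSup hSbdd hrS) (not_le.mpr hr)
    · exact hTx r (le_trans (le_max_left _ _) (not_le.mp hrT).le)
  have hzcl : φ s x ∈ closure U := by
    have htd : Filter.Tendsto (fun r : ℝ => φ r x) (𝓝[>] s) (𝓝 (φ s x)) :=
      (hcontx.tendsto s).mono_left nhdsWithin_le_nhds
    exact mem_closure_of_tendsto htd
      (Filter.eventually_of_mem self_mem_nhdsWithin fun r hr => hgt r hr)
  have hzE : φ s x ∈ E := ⟨hzcl, hsS.2⟩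
  have hzKp : φ s x ∈ Kp φ (closure U) := by
    refine ⟨hzcl, fun r hr => ?_⟩
    rcases eq_or_lt_of_le hr with h0 | h0
    · rw [← h0, hφ0]; exact hzcl
    · have : φ (r + s) x ∈ U := hgt (r + s) (by linarith)
      rw [hφadd r s x] at this
      exact subset_closure this
  have hsmem : s ∈ {s : ℝ | 0 ≤ s ∧ ((φ s '' C₀) ∩ C₂).Nonempty} :=
    ⟨le_trans htpos hts, ⟨φ s x, ⟨x, hxC₀, rfl⟩, hzE, hzKp⟩⟩
  have hsR : s ≤ R := hR hsmem
  have : max R 0 + 1 ≤ s := le_trans ht hts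
  have : R + 1 ≤ s := le_trans (by simp [le_max_left]) this
  linarith

/-- Under (A0) and (A1), for every compact `C₀` and every open neighborhood `V` of the
trapped set `K`, the sets `φ_t(C₀ ∩ K₊)` and `φ_{-t}(C₀ ∩ K₋)` lie in `V` for all
sufficiently large `t`. -/
theorem stmt12 {M : Type*} [TopologicalSpace M] [T2Space M] [LocallyCompactSpace M]
    (φ : ℝ → M → M)
    (hφcont : Continuous fun p : ℝ × M => φ p.1 p.2)
    (hφ0 : ∀ x : M, φ 0 x = x)
    (hφadd : ∀ s t : ℝ, ∀ x : M, φ (s + t) x = φ s (φ t x))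
    (hA0 : IsCompact (Ktrap φ))
    (hA1 : AssumptionA1 φ)
    (C₀ : Set M) (hC₀ : IsCompact C₀)
    (V : Set M) (hV : IsOpen V) (hKV : Ktrap φ ⊆ V) :
    ∃ T : ℝ, 0 ≤ T ∧ ∀ t : ℝ, T ≤ t →
      φ t '' (C₀ ∩ KpGlob φ) ⊆ V ∧ φ (-t) '' (C₀ ∩ KmGlob φ) ⊆ V := by
  -- the time-reversed flow
  set ψ : ℝ → M → M := fun t x => φ (-t) x with hψdef
  have hψcont : Continuous fun p : ℝ × M => ψ p.1 p.2 :=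
    hφcont.comp ((continuous_fst.neg).prodMk continuous_snd)
  have hψ0 : ∀ x : M, ψ 0 x = x := fun x => by simp [hψdef, hφ0 x]
  have hψadd : ∀ s t : ℝ, ∀ x : M, ψ (s + t) x = ψ s (ψ t x) := by
    intro s t x
    simp only [hψdef, neg_add]
    exact hφadd (-s) (-t) x
  have hcancel : ∀ t : ℝ, ∀ x : M, φ t (φ (-t) x) = x := by
    intro t x
    rw [← hφadd t (-t) x, add_neg_cancel, hφ0]
  have hcancel' : ∀ t : ℝ, ∀ x : M, φ (-t) (φ t x) = x := by
    intro t x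
    rw [← hφadd (-t) t x, neg_add_cancel, hφ0]
  have hKpψ : KpGlob ψ = KmGlob φ := rfl
  have hKmψ : KmGlob ψ = KpGlob φ := by
    ext x
    constructor
    · rintro ⟨C, hC, hxC, horb⟩
      refine ⟨C, hC, hxC, fun t ht => ?_⟩
      have := horb t ht
      simpa [hψdef, neg_neg] using this
    · rintro ⟨C, hC, hxC, horb⟩
      refine ⟨C, hC, hxC, fun t ht => ?_⟩
      simp only [hψdef, neg_neg]
      exact horb t ht
  have hKψ : Ktrap ψ = Ktrap φ := by
    rw [Ktrap, Ktrap, hKpψ, hKmψ, Set.inter_comm]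
  have hA0ψ : IsCompact (Ktrap ψ) := hKψ ▸ hA0
  have hA1ψ : AssumptionA1 ψ := by
    intro C₁ C₂ hC₁ hC₂ hB
    have hsets : {t : ℝ | 0 ≤ t ∧ ((ψ t '' C₁) ∩ C₂).Nonempty}
        = {t : ℝ | 0 ≤ t ∧ ((φ t '' C₂) ∩ C₁).Nonempty} := by
      ext t
      simp only [Set.mem_setOf_eq, and_congr_right_iff]
      intro _
      constructor
      · rintro ⟨z, ⟨a, haC₁, rfl⟩, hzC₂⟩
        exact ⟨a, ⟨ψ t a, hzC₂, hcancel t a⟩, haC₁⟩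
      · rintro ⟨z, ⟨b, hbC₂, rfl⟩, hzC₁⟩
        exact ⟨b, ⟨φ t b, hzC₁, hcancel' t b⟩, hbC₂⟩
    rw [hsets] at hB
    obtain ⟨h2, h1⟩ := hA1 C₂ C₁ hC₂ hC₁ hB
    rw [hKpψ, hKmψ]
    exact ⟨h1, h2⟩
  obtain ⟨T₁, hT₁0, hT₁⟩ :=
    forward_half φ hφcont hφ0 hφadd hA0 hA1 C₀ hC₀ V hV hKV
  obtain ⟨T₂, hT₂0, hT₂⟩ :=
    forward_half ψ hψcont hψ0 hψadd hA0ψ hA1ψ C₀ hC₀ V hV (hKψ ▸ hKV)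
  refine ⟨max T₁ T₂, le_trans hT₁0 (le_max_left _ _), fun t ht => ?_⟩
  constructor
  · exact hT₁ t (le_trans (le_max_left _ _) ht)
  · have := hT₂ t (le_trans (le_max_right _ _) ht)
    rw [hKpψ] at this
    exact this
end
end

section
/- Let M be a locally compact Hausdorff space with a continuous flow φ, and assume (A0) and (A1). Then the global forward and backward trapped sets K₊ and K₋ are closed subsets of M, and the non-wandering set NW of the flow is contained in K = K₊ ∩ K₋ (in particular NW is compact). -/
noncomputable section

variable {M : Type*} [TopologicalSpace M]

section Aux

open Filter Set Topology

variable {φ : ℝ → M → M}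

theorem kp_closed_aux (hc : ∀ t, Continuous (φ t)) {C : Set M} (hC : IsClosed C) :
    IsClosed (Kp φ C) := by
  have h : Kp φ C = C ∩ ⋂ t ∈ {t : ℝ | 0 ≤ t}, (φ t) ⁻¹' C := by
    ext x
    simp only [Kp, Set.mem_setOf_eq, Set.mem_inter_iff, Set.mem_iInter, Set.mem_preimage,
      Set.mem_sep_iff]
  rw [h]
  exact hC.inter (isClosed_biInter fun t _ => hC.preimage (hc t))

theorem mem_kpGlob_iff {x : M} :
    x ∈ KpGlob φ ↔ ∃ C : Set M, IsCompact C ∧ x ∈ C ∧ ∀ t : ℝ, 0 ≤ t → φ t x ∈ C :=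
  Iff.rfl

/-- Step 1: any forward-trapped point eventually stays in the interior of any
compact neighborhood of the trapped set. -/
theorem eventually_mem_aux [T2Space M]
    (hφcont : Continuous fun p : ℝ × M => φ p.1 p.2)
    (hφ0 : ∀ x : M, φ 0 x = x)
    (hφadd : ∀ s t : ℝ, ∀ x : M, φ (s + t) x = φ s (φ t x))
    {W : Set M} (hKW : Ktrap φ ⊆ interior W)
    {y : M} (hy : y ∈ KpGlob φ) :
    ∀ᶠ t in atTop, φ t y ∈ interior W := by
  obtain ⟨C, hCcomp, hyC, hyorb⟩ := hy
  have hc : ∀ t, Continuous (φ t) := fun t =>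
    hφcont.comp (continuous_const.prodMk continuous_id)
  by_contra hcon
  rw [Filter.not_eventually] at hcon
  set S : Set ℝ := {t | 0 ≤ t ∧ φ t y ∈ C \ interior W} with hS
  have hfreq : ∃ᶠ t in atTop, t ∈ S := by
    refine (hcon.and_eventually (eventually_ge_atTop 0)).mono ?_
    rintro t ⟨h1, h2⟩
    exact ⟨h2, hyorb t h2, h1⟩
  have hne : NeBot (atTop ⊓ 𝓟 S) := Filter.frequently_mem_iff_neBot.mp hfreq
  set F := atTop ⊓ 𝓟 S with hF
  set g : ℝ → M := fun t => φ t y with hg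
  have hSF : S ∈ F := mem_inf_of_right (mem_principal_self S)
  have hCdiff : IsCompact (C \ interior W) := hCcomp.diff isOpen_interior
  have hle : F.map g ≤ 𝓟 (C \ interior W) := by
    rw [le_principal_iff, Filter.mem_map]
    exact mem_of_superset hSF fun t ht => ht.2
  haveI : (F.map g).NeBot := hne.map g
  obtain ⟨q, hqmem, hq⟩ := hCdiff.exists_clusterPt hle
  -- key: for any r, if eventually 0 ≤ r + t along F, then φ r q ∈ C
  have key : ∀ r : ℝ, (∀ᶠ t in F, 0 ≤ r + t) → φ r q ∈ C := by
    intro r hr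
    set B : Set ℝ := {t | t ∈ S ∧ 0 ≤ r + t} with hB
    have hBF : B ∈ F := Filter.inter_mem hSF hr
    have hqA : q ∈ closure (g '' B) := by
      refine mem_closure_iff_clusterPt.mpr (hq.mono (le_principal_iff.mpr ?_))
      exact image_mem_map hBF
    have himg : φ r '' (g '' B) ⊆ C := by
      rintro _ ⟨_, ⟨t, ⟨htS, htr⟩, rfl⟩, rfl⟩
      rw [hg]
      rw [← hφadd r t y]
      exact hyorb _ htr
    have : φ r q ∈ closure (φ r '' (g '' B)) := by
      apply image_closure_subset_closure_image (hc r)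
      exact ⟨q, hqA, rfl⟩
    exact hCcomp.isClosed.closure_subset ((closure_mono himg).trans
      (by rw [hCcomp.isClosed.closure_eq]) this)
  have hqKp : q ∈ KpGlob φ := by
    refine ⟨C, hCcomp, hqmem.1, fun t ht => key t ?_⟩
    refine Filter.Eventually.filter_mono inf_le_right ?_
    rw [eventually_principal]
    intro u hu
    exact add_nonneg ht hu.1
  have hqKm : q ∈ KmGlob φ := by
    refine ⟨C, hCcomp, hqmem.1, fun t ht => key (-t) ?_⟩
    refine Filter.Eventually.filter_mono inf_le_left ?_
    filter_upwards [eventually_ge_atTop t] with u hu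
    linarith
  exact hqmem.2 (hKW ⟨hqKp, hqKm⟩)

theorem mem_kpGlob_of_eventually
    (hφcont : Continuous fun p : ℝ × M => φ p.1 p.2)
    (hφ0 : ∀ x : M, φ 0 x = x)
    {W : Set M} (hW : IsCompact W) {x : M}
    (h : ∀ᶠ t in atTop, φ t x ∈ W) : x ∈ KpGlob φ := by
  obtain ⟨T, hT⟩ := Filter.eventually_atTop.mp h
  have hcx : Continuous fun t : ℝ => φ t x :=
    hφcont.comp (continuous_id.prodMk continuous_const)
  set T' := max T 0 with hT'
  refine ⟨(fun t : ℝ => φ t x) '' Set.Icc 0 T' ∪ W,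
    (isCompact_Icc.image hcx).union hW, ?_, ?_⟩
  · exact Or.inl ⟨0, ⟨le_refl 0, le_max_right T 0⟩, hφ0 x⟩
  · intro t ht
    rcases le_or_gt t T' with h1 | h1
    · exact Or.inl ⟨t, ⟨ht, h1⟩, rfl⟩
    · exact Or.inr (hT t ((le_max_left T 0).trans h1.le))

/-- The main lemma: `K₊` is closed. -/
theorem kpGlob_closed_aux [T2Space M] [LocallyCompactSpace M]
    (hφcont : Continuous fun p : ℝ × M => φ p.1 p.2)
    (hφ0 : ∀ x : M, φ 0 x = x)
    (hφadd : ∀ s t : ℝ, ∀ x : M, φ (s + t) x = φ s (φ t x))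
    (hA0 : IsCompact (Ktrap φ))
    (hA1 : AssumptionA1 φ) : IsClosed (KpGlob φ) := by
  have hc : ∀ t, Continuous (φ t) := fun t =>
    hφcont.comp (continuous_const.prodMk continuous_id)
  obtain ⟨W, hWc, hKW⟩ := exists_compact_superset hA0
  obtain ⟨W', hW'c, hWW'⟩ := exists_compact_superset hWc
  apply isClosed_of_closure_subset
  intro x hx
  obtain ⟨V, hVc, hVnhds⟩ := exists_compact_mem_nhds x
  suffices h : ∀ᶠ t in atTop, φ t x ∈ W' by
    exact mem_kpGlob_of_eventually hφcont hφ0 hW'c h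
  by_contra hcon
  rw [Filter.not_eventually] at hcon
  set C₂ := Kp φ W' ∩ (W' \ interior W') with hC₂
  have hC₂c : IsCompact C₂ :=
    (hW'c.diff isOpen_interior).inter_left (kp_closed_aux hc hW'c.isClosed)
  have hC₂Km : C₂ ∩ KmGlob φ = ∅ := by
    rw [Set.eq_empty_iff_forall_notMem]
    rintro z ⟨⟨hzKp, hzW', hznint⟩, hzKm⟩
    exact hznint (hWW' (interior_subset (hKW ⟨⟨W', hW'c, hzKp⟩, hzKm⟩)))
  have hunbdd : ¬ BddAbove {t : ℝ | 0 ≤ t ∧ ((φ t '' V) ∩ C₂).Nonempty} := by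
    rintro ⟨b, hb⟩
    obtain ⟨t₀, ht₀, ht₀ge⟩ := (hcon.and_eventually (eventually_ge_atTop (max b 0 + 1))).exists
    have hnhd : V ∩ (φ t₀) ⁻¹' W'ᶜ ∈ 𝓝 x :=
      Filter.inter_mem hVnhds
        ((hW'c.isClosed.isOpen_compl.preimage (hc t₀)).mem_nhds ht₀)
    obtain ⟨y, ⟨hyV, hyW'⟩, hyKp⟩ := mem_closure_iff_nhds.mp hx _ hnhd
    have hev := eventually_mem_aux hφcont hφ0 hφadd hKW hyKp
    obtain ⟨T₁, hT₁⟩ := Filter.eventually_atTop.mp hev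
    set E : Set ℝ := {t | φ t y ∉ W'} with hE
    have hEne : t₀ ∈ E := hyW'
    have hEbdd : BddAbove E := by
      refine ⟨T₁, fun t ht => ?_⟩
      by_contra hlt
      push_neg at hlt
      exact ht (interior_subset (hWW' (interior_subset (hT₁ t hlt.le))))
    set s := sSup E with hs
    have hst₀ : t₀ ≤ s := le_csSup hEbdd hEne
    have ht₀pos : (0:ℝ) ≤ t₀ := le_trans (by positivity) ht₀ge
    have hs0 : 0 ≤ s := le_trans ht₀pos hst₀
    have hcy : Continuous fun t : ℝ => φ t y :=
      hφcont.comp (continuous_id.prodMk continuous_const)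
    have hafter : ∀ t, s < t → φ t y ∈ W' := by
      intro t ht
      by_contra h
      exact absurd (le_csSup hEbdd h) (not_le.mpr ht)
    have hzW' : φ s y ∈ W' := by
      have h1 : s ∈ closure (Set.Ioi s) := by
        rw [closure_Ioi]; exact Set.self_mem_Ici
      have h2 : φ s y ∈ closure ((fun t : ℝ => φ t y) '' Set.Ioi s) :=
        image_closure_subset_closure_image hcy ⟨s, h1, rfl⟩
      refine hW'c.isClosed.closure_subset ((closure_mono ?_).trans
        (by rw [hW'c.isClosed.closure_eq]) h2)
      rintro _ ⟨t, ht, rfl⟩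
      exact hafter t ht
    have hznint : φ s y ∉ interior W' := by
      have h1 : s ∈ closure E := csSup_mem_closure ⟨t₀, hEne⟩ hEbdd
      have h2 : φ s y ∈ closure ((fun t : ℝ => φ t y) '' E) :=
        image_closure_subset_closure_image hcy ⟨s, h1, rfl⟩
      have h3 : φ s y ∈ (interior W')ᶜ := by
        refine (isClosed_compl_iff.mpr isOpen_interior).closure_subset
          ((closure_mono ?_).trans
            (by rw [(isClosed_compl_iff.mpr isOpen_interior).closure_eq]) h2)
        rintro _ ⟨t, ht, rfl⟩
        exact fun hmem => ht (interior_subset hmem)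
      exact h3
    have hzKp : φ s y ∈ Kp φ W' := by
      refine ⟨hzW', fun u hu => ?_⟩
      rcases eq_or_lt_of_le hu with h | h
      · rw [← h, hφ0]; exact hzW'
      · rw [← hφadd u s y]
        exact hafter (u + s) (by linarith)
    have hsmem : s ∈ {t : ℝ | 0 ≤ t ∧ ((φ t '' V) ∩ C₂).Nonempty} :=
      ⟨hs0, ⟨φ s y, ⟨y, hyV, rfl⟩, hzKp, hzW', hznint⟩⟩
    have hsb : s ≤ b := hb hsmem
    have : b ≤ max b 0 := le_max_left b 0
    linarith
  obtain ⟨-, h2⟩ := hA1 V C₂ hVc hC₂c hunbdd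
  rw [hC₂Km] at h2
  exact Set.not_nonempty_empty h2

end Aux

open Filter Set Topology

/-- Under (A0) and (A1), the global forward and backward trapped sets `K₊, K₋` are closed,
and the non-wandering set is contained in `K = K₊ ∩ K₋`; in particular it is compact. -/
theorem stmt14 {M : Type*} [TopologicalSpace M] [T2Space M] [LocallyCompactSpace M]
    (φ : ℝ → M → M)
    (hφcont : Continuous fun p : ℝ × M => φ p.1 p.2)
    (hφ0 : ∀ x : M, φ 0 x = x)
    (hφadd : ∀ s t : ℝ, ∀ x : M, φ (s + t) x = φ s (φ t x))
    (hA0 : IsCompact (Ktrap φ))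
    (hA1 : AssumptionA1 φ) :
    IsClosed (KpGlob φ) ∧ IsClosed (KmGlob φ) ∧
      NW φ ⊆ Ktrap φ ∧ IsCompact (NW φ) := by
  -- the reversed flow
  set ψ : ℝ → M → M := fun t x => φ (-t) x with hψ
  have hψcont : Continuous fun p : ℝ × M => ψ p.1 p.2 :=
    hφcont.comp ((continuous_neg.comp continuous_fst).prodMk continuous_snd)
  have hψ0 : ∀ x : M, ψ 0 x = x := fun x => by simp [hψ, hφ0 x]
  have hψadd : ∀ s t : ℝ, ∀ x : M, ψ (s + t) x = ψ s (ψ t x) := by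
    intro s t x
    simp only [hψ, neg_add]
    exact hφadd (-s) (-t) x
  have hKmKp : KmGlob φ = KpGlob ψ := rfl
  have hKpKm : KpGlob φ = KmGlob ψ := by
    unfold KpGlob KmGlob Kp Km
    simp [hψ]
  have hKtrap : Ktrap ψ = Ktrap φ := by
    unfold Ktrap
    rw [← hKmKp, ← hKpKm, Set.inter_comm]
  have hψA0 : IsCompact (Ktrap ψ) := by rw [hKtrap]; exact hA0
  have hinv : ∀ t : ℝ, ∀ x : M, φ t (φ (-t) x) = x := by
    intro t x
    rw [← hφadd t (-t) x, add_neg_cancel, hφ0]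
  have hinv' : ∀ t : ℝ, ∀ x : M, φ (-t) (φ t x) = x := by
    intro t x
    rw [← hφadd (-t) t x, neg_add_cancel, hφ0]
  have hψA1 : AssumptionA1 ψ := by
    intro C₁ C₂ hC₁ hC₂ hbdd
    have hsets : {t : ℝ | 0 ≤ t ∧ ((ψ t '' C₁) ∩ C₂).Nonempty}
        = {t : ℝ | 0 ≤ t ∧ ((φ t '' C₂) ∩ C₁).Nonempty} := by
      ext t
      simp only [Set.mem_setOf_eq, and_congr_right_iff]
      intro _
      constructor
      · rintro ⟨z, ⟨c₁, hc₁, rfl⟩, hz₂⟩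
        exact ⟨c₁, ⟨ψ t c₁, hz₂, hinv t c₁⟩, hc₁⟩
      · rintro ⟨z, ⟨c₂, hc₂, rfl⟩, hz₁⟩
        exact ⟨c₂, ⟨φ t c₂, hz₁, hinv' t c₂⟩, hc₂⟩
    rw [hsets] at hbdd
    obtain ⟨h1, h2⟩ := hA1 C₂ C₁ hC₂ hC₁ hbdd
    rw [hKpKm] at h1
    rw [hKmKp] at h2
    exact ⟨h2, h1⟩
  have hKpClosed : IsClosed (KpGlob φ) :=
    kpGlob_closed_aux hφcont hφ0 hφadd hA0 hA1
  have hKmClosed : IsClosed (KmGlob φ) := by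
    rw [hKmKp]
    exact kpGlob_closed_aux hψcont hψ0 hψadd hψA0 hψA1
  have hNWsub : NW φ ⊆ Ktrap φ := by
    intro x hx
    have hcl : ∀ U ∈ 𝓝 x, (U ∩ KpGlob φ).Nonempty ∧ (U ∩ KmGlob φ).Nonempty := by
      intro U hU
      obtain ⟨V, hVnhds, hVU, hVc⟩ := local_compact_nhds hU
      have hxint : x ∈ interior V := mem_interior_iff_mem_nhds.mpr hVnhds
      have hunbdd : ¬ BddAbove {t : ℝ | 0 ≤ t ∧ ((φ t '' V) ∩ V).Nonempty} := by
        rintro ⟨b, hb⟩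
        obtain ⟨t, htge, hz⟩ := hx (interior V) isOpen_interior hxint (max b 0 + 1)
          (by positivity)
        have htmem : t ∈ {t : ℝ | 0 ≤ t ∧ ((φ t '' V) ∩ V).Nonempty} := by
          refine ⟨le_trans (by positivity) htge, ?_⟩
          exact hz.mono (Set.inter_subset_inter (Set.image_mono interior_subset)
            interior_subset)
        have := hb htmem
        have : b ≤ max b 0 := le_max_left b 0
        linarith [hb htmem]
      obtain ⟨h1, h2⟩ := hA1 V V hVc hVc hunbdd
      exact ⟨h1.mono (Set.inter_subset_inter_left _ hVU),
        h2.mono (Set.inter_subset_inter_left _ hVU)⟩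
    constructor
    · rw [← hKpClosed.closure_eq]
      exact mem_closure_iff_nhds.mpr fun U hU => (hcl U hU).1
    · rw [← hKmClosed.closure_eq]
      exact mem_closure_iff_nhds.mpr fun U hU => (hcl U hU).2
  have hNWclosed : IsClosed (NW φ) := by
    rw [← isOpen_compl_iff]
    rw [isOpen_iff_mem_nhds]
    intro x hx
    simp only [NW, Set.mem_compl_iff, Set.mem_setOf_eq] at hx
    push_neg at hx
    obtain ⟨V, hVopen, hxV, T, hT, hV⟩ := hx
    refine Filter.mem_of_superset (hVopen.mem_nhds hxV) ?_
    intro y hy hyNW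
    obtain ⟨t, ht, hne⟩ := hyNW V hVopen hy T hT
    rw [hV t ht] at hne
    exact Set.not_nonempty_empty hne
  exact ⟨hKpClosed, hKmClosed, hNWsub, hA0.of_isClosed_subset hNWclosed hNWsub⟩
end
end

section
/- For every x ∈ AdS₃ and every ν ∈ ℝ⁴ with q(ν) = 0 and q(x,ν) < 0, there exists a unique pair (v, λ) with v ∈ ℝ⁴, λ > 0, q(v) = 1, q(x,v) = 0 and x + v = λ·ν; explicitly v = −x − ν / q(x,ν) and λ = −1 / q(x,ν). Consequently, the endpoint map v ↦ ℝ₊·(x+v) is a bijection from the fiber T¹ₓAdS₃ = {v : q(x,v) = 0, q(v) = 1} onto the set of boundary rays ℝ₊·ν with q(x,ν) < 0. -/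
noncomputable section

/-- For `x ∈ AdS₃` and a null `ν` with `q(x,ν) < 0`, the pair `(v, λ)` with `q(v) = 1`,
`q(x,v) = 0`, `λ > 0` and `x + v = λν` exists, is unique, and is given explicitly by
`v = -x - ν/q(x,ν)`, `λ = -1/q(x,ν)`.  Consequently the endpoint map `v ↦ ℝ₊(x+v)` is a
bijection from the fiber `T¹ₓAdS₃` onto the set of boundary rays `ℝ₊ν` with `q(x,ν) < 0`:
the second clause is its injectivity on rays. -/
theorem stmt16 (x : Fin 4 → ℝ) (hx : qf x x = -1) :
    (∀ ν : Fin 4 → ℝ, qf ν ν = 0 → qf x ν < 0 →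
      ∀ (v : Fin 4 → ℝ) (lam : ℝ),
        (0 < lam ∧ qf v v = 1 ∧ qf x v = 0 ∧ x + v = lam • ν) ↔
          (v = -x - (qf x ν)⁻¹ • ν ∧ lam = -(qf x ν)⁻¹)) ∧
    (∀ v v' : Fin 4 → ℝ, qf x v = 0 → qf v v = 1 → qf x v' = 0 → qf v' v' = 1 →
      ∀ μ : ℝ, 0 < μ → x + v = μ • (x + v') → v = v') := by
  constructor
  · intro ν hν hxν v lam
    have hB : qf x ν ≠ 0 := ne_of_lt hxν
    have hc : qf x ν * (qf x ν)⁻¹ = 1 := mul_inv_cancel₀ hB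
    constructor
    · rintro ⟨hlam, -, hxv, hsum⟩
      have hv : v = lam • ν - x := eq_sub_of_add_eq' hsum
      have hq : lam * qf x ν = -1 := by
        have h1 : qf x (x + v) = lam * qf x ν := by
          rw [hsum]; simp only [qf, Pi.smul_apply, smul_eq_mul]; ring
        have h2 : qf x (x + v) = -1 := by
          simp only [qf, Pi.add_apply] at h1 ⊢
          simp only [qf] at hx hxv
          linarith
        linarith [h1, h2]
      have hlam' : lam = -(qf x ν)⁻¹ := by
        field_simp
        linarith [hq]
      refine ⟨?_, hlam'⟩
      funext i
      simp [hv, hlam']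
      ring
    · rintro ⟨hv, hlam⟩
      have hcneg : (qf x ν)⁻¹ < 0 := inv_lt_zero.mpr hxν
      refine ⟨by rw [hlam]; linarith, ?_, ?_, ?_⟩
      · subst hv
        simp only [qf, Pi.sub_apply, Pi.neg_apply, Pi.smul_apply, smul_eq_mul]
        simp only [qf] at hx hν hc
        linear_combination hx + 2*hc + ((-(x 0 * ν 0) - x 1 * ν 1 + x 2 * ν 2 + x 3 * ν 3)⁻¹)^2 * hν
      · subst hv
        simp only [qf, Pi.sub_apply, Pi.neg_apply, Pi.smul_apply, smul_eq_mul]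
        simp only [qf] at hx hc
        linear_combination -hx - hc
      · funext i
        simp [hv, hlam]
        ring
  · intro v v' hxv hvv hxv' hvv' μ hμ hsum
    have h1 : qf x (x + v) = -1 := by
      simp only [qf, Pi.add_apply]
      simp only [qf] at hx hxv
      linarith
    have h2 : qf x (x + v') = -1 := by
      simp only [qf, Pi.add_apply]
      simp only [qf] at hx hxv'
      linarith
    have h3 : qf x (x + v) = μ * qf x (x + v') := by
      rw [hsum]
      simp only [qf, Pi.smul_apply, smul_eq_mul]
      ring
    have hμ1 : μ = 1 := by
      rw [h1, h2] at h3; linarith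
    have : x + v = x + v' := by rw [hsum, hμ1, one_smul]
    exact add_left_cancel this
end
end
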